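/- arXiv:1901.02363 — 9 statements merged into one kernel-verified Lean document; each statement's English description precedes it below -/
import Mathlib

section
/- Let C > 0 and let s : ℝ → ℝ be nonincreasing (antitone) and concave on the interval [0, C]. Then the function f defined by f(x) = x·s(x) is concave on [0, C]. -/
open Set

theorem ConcaveOn.id_mul_of_antitoneOn {𝕜 : Type*} [Field 𝕜] [LinearOrder 𝕜]
    [IsStrictOrderedRing 𝕜] {D : Set 𝕜} {s : 𝕜 → 𝕜} (hD : D ⊆ Ici 0)
    (hs_anti : AntitoneOn s D) (hs_conc : ConcaveOn 𝕜 D s) :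
    ConcaveOn 𝕜 D (fun x => x * s x) := by
  refine ⟨hs_conc.1, fun x hx y hy a b ha hb hab => ?_⟩
  simp only [smul_eq_mul]
  have hz : 0 ≤ a * x + b * y := hD (hs_conc.1 hx hy ha hb hab)
  have hrearr : x * s x + y * s y ≤ x * s y + y * s x :=
    (monotoneOn_id.antivaryOn hs_anti).mul_add_mul_le_mul_add_mul hx hy
  obtain rfl : b = 1 - a := by linear_combination hab
  -- the first gap is `a (1 - a) (x - y) (s y - s x) ≥ 0`
  calc a * (x * s x) + (1 - a) * (y * s y)
      ≤ (a * x + (1 - a) * y) * (a * s x + (1 - a) * s y) := by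
        linear_combination (a * (1 - a)) * hrearr
    _ ≤ (a * x + (1 - a) * y) * s (a * x + (1 - a) * y) :=
        mul_le_mul_of_nonneg_left (hs_conc.2 hx hy ha hb hab) hz

theorem stmt_0_general (C : ℝ) (s : ℝ → ℝ)
    (hs_anti : AntitoneOn s (Set.Icc 0 C))
    (hs_conc : ConcaveOn ℝ (Set.Icc 0 C) s) :
    ConcaveOn ℝ (Set.Icc 0 C) (fun x => x * s x) :=
  hs_conc.id_mul_of_antitoneOn (fun _ hx => hx.1) hs_anti

/-- If `s` is nonincreasing and concave on `[0, C]` (with `C > 0`), then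
`f(x) = x * s(x)` is concave on `[0, C]`. -/
theorem stmt_0 (C : ℝ) (hC : 0 < C) (s : ℝ → ℝ)
    (hs_anti : AntitoneOn s (Set.Icc 0 C))
    (hs_conc : ConcaveOn ℝ (Set.Icc 0 C) s) :
    ConcaveOn ℝ (Set.Icc 0 C) (fun x => x * s x) :=
  stmt_0_general C s hs_anti hs_conc
end

section
/- Let N ∈ ℝ^n. Then the following are equivalent: (1) there exist y ∈ ℝ^n and vectors u_1, …, u_K with u_k ∈ Δ_k for each k, ∑_{k=1}^K u_k = N, and each u_k maximizing v ↦ ⟨ρ_k + y, v⟩ over Δ_k; (2) N belongs to the Minkowski sum Δ_1 + ⋯ + Δ_K. -/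
/-!
Only (2) ⇒ (1) needs an argument. By compactness some allocation `u` (with `∑ₖ uₖ = N`,
`uₖ ∈ Δₖ`) maximizes the total value `∑ₖ ⟨ρₖ, uₖ⟩`. Call `i → j` a possible step for customer
`k` when `uₖ` can move mass from `i` to `j` inside `Δₖ`; its gain is `ρₖ j - ρₖ i`. Pushing a
little mass around a closed walk of possible steps keeps the allocation feasible, so by
maximality no such cycle has positive total gain. Hence heaviest simple paths give a potential
`y` with `ρₖ j + y j ≤ ρₖ i + y i` along every possible step, and on `Δₖ` optimality is decided
by such single exchanges, so each `uₖ` maximizes `⟨ρₖ + y, ·⟩` over `Δₖ`.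
-/

open Finset Filter Topology

section WalkSum

variable {ι M : Type*} [AddCommMonoid M]

def walkSum (f : ι → ι → M) : List ι → M
  | [] => 0
  | [_] => 0
  | a :: b :: l => f a b + walkSum f (b :: l)

@[simp] theorem walkSum_nil (f : ι → ι → M) : walkSum f [] = 0 := rfl

@[simp] theorem walkSum_singleton (f : ι → ι → M) (a : ι) : walkSum f [a] = 0 := rfl

@[simp] theorem walkSum_cons_cons (f : ι → ι → M) (a b : ι) (l : List ι) :
    walkSum f (a :: b :: l) = f a b + walkSum f (b :: l) := rfl

@[simp] theorem walkSum_zero : ∀ l : List ι, walkSum (fun _ _ => (0 : M)) l = 0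
  | [] | [_] => rfl
  | _ :: b :: l => by simp [walkSum_zero (b :: l)]

theorem walkSum_append_cons (f : ι → ι → M) (x : ι) :
    ∀ l₁ l₂ : List ι, walkSum f (l₁ ++ x :: l₂) = walkSum f (l₁ ++ [x]) + walkSum f (x :: l₂)
  | [], _ => by simp
  | [_], _ => by simp
  | a :: b :: l₁, l₂ => by
    have ih := walkSum_append_cons f x (b :: l₁) l₂
    simp only [List.cons_append, walkSum_cons_cons] at ih ⊢
    rw [ih, add_assoc]

theorem map_walkSum {N F : Type*} [AddCommMonoid N] [FunLike F M N] [AddMonoidHomClass F M N]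
    (g : F) (f : ι → ι → M) :
    ∀ l : List ι, g (walkSum f l) = walkSum (fun a b => g (f a b)) l
  | [] => by simp
  | [_] => by simp
  | a :: b :: l => by simp [map_walkSum g f (b :: l)]

theorem walkSum_apply {α : Type*} (f : ι → ι → α → M) (l : List ι) (x : α) :
    walkSum f l x = walkSum (fun a b => f a b x) l :=
  map_walkSum (Pi.evalAddMonoidHom (fun _ => M) x) f l

theorem sum_walkSum {α : Type*} (s : Finset α) (f : α → ι → ι → M) :
    ∀ l : List ι, ∑ x ∈ s, walkSum (f x) l = walkSum (fun a b => ∑ x ∈ s, f x a b) l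
  | [] => by simp
  | [_] => by simp
  | a :: b :: l => by simp [sum_add_distrib, sum_walkSum s f (b :: l)]

theorem walkSum_sub_of_cons_append {G : Type*} [AddCommGroup G] (φ : ι → G) (b : ι) :
    ∀ (a : ι) (l : List ι), walkSum (fun x y => φ y - φ x) (a :: (l ++ [b])) = φ b - φ a
  | a, [] => by simp
  | a, c :: l => by
    rw [List.cons_append, walkSum_cons_cons, walkSum_sub_of_cons_append φ b c l]
    abel

section Order

variable [PartialOrder M] [IsOrderedAddMonoid M] {E : ι → ι → Prop} {f : ι → ι → M}

theorem walkSum_nonneg (hf : ∀ a b, E a b → 0 ≤ f a b) :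
    ∀ {l : List ι}, l.IsChain E → 0 ≤ walkSum f l
  | [], _ | [_], _ => le_rfl
  | a :: b :: l, h => by
    rw [List.isChain_cons_cons] at h
    exact add_nonneg (hf a b h.1) (walkSum_nonneg hf h.2)

theorem walkSum_nonpos (hf : ∀ a b, E a b → f a b ≤ 0) :
    ∀ {l : List ι}, l.IsChain E → walkSum f l ≤ 0
  | [], _ | [_], _ => le_rfl
  | a :: b :: l, h => by
    rw [List.isChain_cons_cons] at h
    exact add_nonpos (hf a b h.1) (walkSum_nonpos hf h.2)

end Order

end WalkSum

section Potential

variable {ι : Type*} {E : ι → ι → Prop} {c : ι → ι → ℝ}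

theorem exists_nodup_walkSum_ge_of_cons
    (hcyc : ∀ i l, (i :: (l ++ [i])).IsChain E → walkSum c (i :: (l ++ [i])) ≤ 0)
    {i : ι} {p : List ι} (hp : p.Nodup) (hchain : (i :: p).IsChain E) :
    ∃ q : List ι, q.Nodup ∧ q.IsChain E ∧ q.head? = some i ∧
      walkSum c (i :: p) ≤ walkSum c q := by
  by_cases hi : i ∈ p
  · -- cutting out the cycle `i :: a ++ [i]` cannot decrease the weight
    obtain ⟨a, b, rfl⟩ := List.append_of_mem hi
    have hsplit : i :: (a ++ i :: b) = (i :: a) ++ i :: b := rfl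
    have hcycle : (i :: (a ++ [i])).IsChain E := hchain.prefix ⟨b, by simp⟩
    refine ⟨i :: b, hp.sublist (List.sublist_append_right a _), hchain.suffix ⟨i :: a, rfl⟩,
      rfl, ?_⟩
    rw [hsplit, walkSum_append_cons, List.cons_append]
    linarith [hcyc i a hcycle]
  · exact ⟨i :: p, List.nodup_cons.2 ⟨hi, hp⟩, hchain, rfl, le_rfl⟩

theorem exists_potential_of_walkSum_cycle_nonpos [Fintype ι]
    (hcyc : ∀ i l, (i :: (l ++ [i])).IsChain E → walkSum c (i :: (l ++ [i])) ≤ 0) :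
    ∃ y : ι → ℝ, ∀ i j, E i j → c i j + y j ≤ y i := by
  classical
  let paths (i : ι) : Finset {l : List ι // l.Nodup} :=
    univ.filter fun l => l.1.IsChain E ∧ l.1.head? = some i
  let weight (l : {l : List ι // l.Nodup}) : ℝ := walkSum c l.1
  have hpaths (i : ι) : (paths i).Nonempty := ⟨⟨[i], List.nodup_singleton i⟩, by simp [paths]⟩
  refine ⟨fun i => (paths i).sup' (hpaths i) weight, fun i j hij => ?_⟩
  obtain ⟨⟨p, hp⟩, hpj, hmax⟩ := exists_mem_eq_sup' (hpaths j) weight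
  simp only [paths, mem_filter, mem_univ, true_and] at hpj
  obtain ⟨p, rfl⟩ : ∃ p', p = j :: p' := List.head?_eq_some_iff.1 hpj.2
  obtain ⟨q, hq, hqchain, hqhead, hle⟩ :=
    exists_nodup_walkSum_ge_of_cons hcyc hp (List.isChain_cons_cons.2 ⟨hij, hpj.1⟩)
  have hqi : ⟨q, hq⟩ ∈ paths i := by simp [paths, hqchain, hqhead]
  calc c i j + (paths j).sup' (hpaths j) weight = walkSum c (i :: j :: p) := by
        rw [hmax, walkSum_cons_cons]
    _ ≤ weight ⟨q, hq⟩ := hle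
    _ ≤ (paths i).sup' (hpaths i) weight := le_sup' weight hqi

end Potential

section CappedSimplex

variable {ι : Type*} [Fintype ι]

def cappedSimplex (R : ℝ) (J : Set ι) : Set (ι → ℝ) :=
  {u | (∀ i, u i ∈ Set.Icc (0 : ℝ) 1) ∧ (∑ i, u i) = R ∧ ∀ i ∈ J, u i = 0}

def CanShift (u : ι → ℝ) (J : Set ι) (i j : ι) : Prop :=
  0 < u i ∧ u j < 1 ∧ j ∉ J

theorem isCompact_cappedSimplex (R : ℝ) (J : Set ι) : IsCompact (cappedSimplex R J) := by
  refine (isCompact_univ_pi fun _ => isCompact_Icc).of_isClosed_subset ?_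
    fun u hu i _ => hu.1 i
  simp only [cappedSimplex, Set.ofPred_and, Set.ofPred_forall]
  refine (isClosed_iInter fun i => isClosed_Icc.preimage (continuous_apply i)).inter
    ((isClosed_eq (by fun_prop) continuous_const).inter
      (isClosed_iInter fun i => isClosed_iInter fun _ =>
        isClosed_eq (continuous_apply i) continuous_const))

theorem dotProduct_nonpos_of_sum_eq_zero {c d : ι → ℝ} (hd : ∑ i, d i = 0)
    (hcd : ∀ i j, 0 < d i → d j < 0 → c i ≤ c j) : c ⬝ᵥ d ≤ 0 := by
  classical
  rcases (univ.filter fun i => 0 < d i).eq_empty_or_nonempty with hP | hP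
  · have hnonpos : ∀ i ∈ univ, d i ≤ 0 := fun i _ => by
      simpa using filter_eq_empty_iff.1 hP (mem_univ i)
    have hzero := (sum_eq_zero_iff_of_nonpos hnonpos).1 hd
    simp [dotProduct, hzero]
  · -- every increased coordinate is worth at most `t`, every decreased one at least `t`
    set t := (univ.filter fun i => 0 < d i).sup' hP c
    have hle : ∀ i, c i * d i ≤ t * d i := fun i => by
      rcases lt_trichotomy (d i) 0 with hi | hi | hi
      · have : t ≤ c i := sup'_le _ _ fun j hj => hcd j i (by simpa using hj) hi
        nlinarith
      · simp [hi]
      · have : c i ≤ t := le_sup' c (by simpa using hi)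
        nlinarith
    calc c ⬝ᵥ d ≤ ∑ i, t * d i := sum_le_sum fun i _ => hle i
      _ = 0 := by rw [← mul_sum, hd, mul_zero]

theorem dotProduct_le_of_forall_canShift {R : ℝ} {J : Set ι} {c u v : ι → ℝ}
    (hu : u ∈ cappedSimplex R J) (hv : v ∈ cappedSimplex R J)
    (hc : ∀ i j, CanShift u J i j → c j ≤ c i) : c ⬝ᵥ v ≤ c ⬝ᵥ u := by
  have hd : ∑ i, (v - u) i = 0 := by simp [sum_sub_distrib, hu.2.1, hv.2.1]
  have := dotProduct_nonpos_of_sum_eq_zero hd fun i j hi hj => by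
    simp only [Pi.sub_apply, sub_pos, sub_neg] at hi hj
    refine hc j i ⟨(hv.1 j).1.trans_lt hj, hi.trans_le (hv.1 i).2, fun hJ => ?_⟩
    linarith [hv.2.2 i hJ, (hu.1 i).1]
  rwa [dotProduct_sub, sub_nonpos] at this

theorem eventually_nonneg_add_mul {a b : ℝ} (ha : 0 ≤ a) (hb : b < 0 → 0 < a) :
    ∀ᶠ ε in 𝓝[>] 0, 0 ≤ a + ε * b := by
  rcases lt_or_ge b 0 with hb' | hb'
  · have : Tendsto (fun ε => a + ε * b) (𝓝[>] 0) (𝓝 a) :=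
      ((continuous_const.add (continuous_id.mul continuous_const)).tendsto' 0 a
        (by simp)).mono_left nhdsWithin_le_nhds
    exact (this.eventually (lt_mem_nhds (hb hb'))).mono fun _ h => h.le
  · filter_upwards [self_mem_nhdsWithin] with ε hε using add_nonneg ha (mul_nonneg hε.le hb')

theorem eventually_add_smul_mem_cappedSimplex {R : ℝ} {J : Set ι} {u d : ι → ℝ}
    (hu : u ∈ cappedSimplex R J) (hd : ∑ i, d i = 0)
    (hpos : ∀ i, 0 < d i → u i < 1 ∧ i ∉ J) (hneg : ∀ i, d i < 0 → 0 < u i) :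
    ∀ᶠ ε in 𝓝[>] (0 : ℝ), u + ε • d ∈ cappedSimplex R J := by
  obtain ⟨hbox, hsum, hJ⟩ := hu
  have hcoord (i : ι) : ∀ᶠ ε in 𝓝[>] (0 : ℝ), u i + ε * d i ∈ Set.Icc 0 1 := by
    have hupper := eventually_nonneg_add_mul (a := 1 - u i) (b := -d i)
      (sub_nonneg.2 (hbox i).2) fun h => sub_pos.2 (hpos i (neg_neg_iff_pos.1 h)).1
    filter_upwards [eventually_nonneg_add_mul (hbox i).1 (hneg i), hupper] with ε h0 h1
    exact ⟨h0, by linarith⟩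
  filter_upwards [eventually_all.2 hcoord] with ε hε
  refine ⟨hε, by simp [sum_add_distrib, ← mul_sum, hsum, hd], fun i hi => ?_⟩
  have hdi : d i = 0 := by
    rcases lt_trichotomy (d i) 0 with h | h | h
    · linarith [hneg i h, hJ i hi]
    · exact h
    · exact absurd hi (hpos i h).2
  simp [hJ i hi, hdi]

end CappedSimplex

section Allocation

variable {κ ι : Type*}

def allocations [Fintype κ] {E : Type*} [AddCommMonoid E] (Δ : κ → Set E) (N : E) :
    Set (κ → E) :=
  {u | (∀ k, u k ∈ Δ k) ∧ ∑ k, u k = N}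

theorem isCompact_allocations [Fintype κ] {E : Type*} [AddCommMonoid E] [TopologicalSpace E]
    [ContinuousAdd E] [T2Space E] {Δ : κ → Set E} (hΔ : ∀ k, IsCompact (Δ k)) (N : E) :
    IsCompact (allocations Δ N) := by
  have hclosed : IsClosed {u : κ → E | ∑ k, u k = N} :=
    isClosed_eq (by fun_prop) continuous_const
  convert (isCompact_univ_pi hΔ).inter_right hclosed using 1
  ext u
  simp [allocations]

def welfare [Fintype κ] [Fintype ι] (ρ : κ → ι → ℝ) : (κ → ι → ℝ) →ₗ[ℝ] ℝ where
  toFun u := ∑ k, ρ k ⬝ᵥ u k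
  map_add' u v := by simp [dotProduct_add, sum_add_distrib]
  map_smul' a u := by simp [dotProduct_smul, mul_sum]

variable [DecidableEq κ] [DecidableEq ι]

def shiftFlow (lab : ι → ι → κ) (L : List ι) : κ → ι → ℝ :=
  walkSum (fun a b => Pi.single (lab a b) (Pi.single b 1 - Pi.single a 1)) L

theorem sum_shiftFlow_cycle [Fintype κ] (lab : ι → ι → κ) (i : ι) (l : List ι) :
    ∑ k, shiftFlow lab (i :: (l ++ [i])) k = 0 := by
  simp only [shiftFlow, walkSum_apply, sum_walkSum, sum_pi_single', mem_univ, if_true]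
  rw [walkSum_sub_of_cons_append (fun x => (Pi.single x 1 : ι → ℝ)), sub_self]

theorem sum_shiftFlow_apply [Fintype ι] (lab : ι → ι → κ) (L : List ι) (k : κ) :
    ∑ i, shiftFlow lab L k i = 0 := by
  simp [shiftFlow, walkSum_apply, sum_walkSum, Pi.single_apply, ite_apply, sum_sub_distrib]

theorem welfare_shiftFlow [Fintype κ] [Fintype ι] (ρ : κ → ι → ℝ) (lab : ι → ι → κ)
    (L : List ι) :
    welfare ρ (shiftFlow lab L) = walkSum (fun a b => ρ (lab a b) b - ρ (lab a b) a) L := by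
  simp [shiftFlow, map_walkSum, welfare, Pi.single_apply, apply_ite, dotProduct_sub]

section Sign

variable {u : κ → ι → ℝ} {J : κ → Set ι} {lab : ι → ι → κ} {L : List ι}

theorem pos_of_shiftFlow_neg
    (hL : L.IsChain fun a b => CanShift (u (lab a b)) (J (lab a b)) a b)
    {k : κ} {i : ι} (h : shiftFlow lab L k i < 0) : 0 < u k i := by
  by_contra hu
  have : 0 ≤ shiftFlow lab L k i := by
    rw [shiftFlow, walkSum_apply, walkSum_apply]
    refine walkSum_nonneg (fun a b hab => ?_) hL
    have hleave : ¬(k = lab a b ∧ i = a) := by rintro ⟨rfl, rfl⟩; exact hu hab.1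
    simp only [Pi.single_apply, ite_apply, Pi.sub_apply, Pi.zero_apply]
    split_ifs <;> simp_all
  linarith

theorem lt_one_and_notMem_of_shiftFlow_pos
    (hL : L.IsChain fun a b => CanShift (u (lab a b)) (J (lab a b)) a b)
    {k : κ} {i : ι} (h : 0 < shiftFlow lab L k i) : u k i < 1 ∧ i ∉ J k := by
  by_contra hu
  have : shiftFlow lab L k i ≤ 0 := by
    rw [shiftFlow, walkSum_apply, walkSum_apply]
    refine walkSum_nonpos (fun a b hab => ?_) hL
    have henter : ¬(k = lab a b ∧ i = b) := by rintro ⟨rfl, rfl⟩; exact hu hab.2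
    simp only [Pi.single_apply, ite_apply, Pi.sub_apply, Pi.zero_apply]
    split_ifs <;> simp_all
  linarith

end Sign

end Allocation

section Prices

variable {κ ι : Type*} [Fintype κ] [DecidableEq κ] [Fintype ι] [DecidableEq ι]
  {R : κ → ℝ} {J : κ → Set ι} {ρ : κ → ι → ℝ} {N : ι → ℝ} {u : κ → ι → ℝ}

theorem walkSum_gain_cycle_nonpos_of_isMaxOn
    (hu : u ∈ allocations (fun k => cappedSimplex (R k) (J k)) N)
    (hmax : IsMaxOn (welfare ρ) (allocations (fun k => cappedSimplex (R k) (J k)) N) u)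
    (lab : ι → ι → κ) {i : ι} {l : List ι}
    (hL : (i :: (l ++ [i])).IsChain fun a b => CanShift (u (lab a b)) (J (lab a b)) a b) :
    walkSum (fun a b => ρ (lab a b) b - ρ (lab a b) a) (i :: (l ++ [i])) ≤ 0 := by
  set d := shiftFlow lab (i :: (l ++ [i]))
  have hfeas : ∀ᶠ ε in 𝓝[>] (0 : ℝ),
      u + ε • d ∈ allocations (fun k => cappedSimplex (R k) (J k)) N := by
    filter_upwards [eventually_all.2 fun k => eventually_add_smul_mem_cappedSimplex (hu.1 k)
      (sum_shiftFlow_apply lab _ k) (fun _ => lt_one_and_notMem_of_shiftFlow_pos hL)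
      (fun _ => pos_of_shiftFlow_neg hL)] with ε hε
    refine ⟨hε, ?_⟩
    simp [sum_add_distrib, ← smul_sum, d, sum_shiftFlow_cycle, hu.2]
  obtain ⟨ε, hε, hεpos⟩ := (hfeas.and self_mem_nhdsWithin).exists
  have hle := isMaxOn_iff.1 hmax _ hε
  rw [map_add, map_smul, smul_eq_mul, add_le_iff_nonpos_right] at hle
  rw [← welfare_shiftFlow]
  exact nonpos_of_mul_nonpos_right hle hεpos

theorem exists_prices_of_isMaxOn
    (hu : u ∈ allocations (fun k => cappedSimplex (R k) (J k)) N)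
    (hmax : IsMaxOn (welfare ρ) (allocations (fun k => cappedSimplex (R k) (J k)) N) u) :
    ∃ y : ι → ℝ, ∀ k i j, CanShift (u k) (J k) i j → (ρ k + y) j ≤ (ρ k + y) i := by
  rcases isEmpty_or_nonempty κ with hκ | hκ
  · exact ⟨0, fun k => isEmptyElim k⟩
  have hbest (a b : ι) : ∃ k, (∃ k', CanShift (u k') (J k') a b) →
      CanShift (u k) (J k) a b ∧
        ∀ k', CanShift (u k') (J k') a b → ρ k' b - ρ k' a ≤ ρ k b - ρ k a := by
    by_cases h : ∃ k', CanShift (u k') (J k') a b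
    · obtain ⟨k, hk, hmax⟩ :=
        Set.exists_max_image _ (fun k => ρ k b - ρ k a) (Set.toFinite _) h
      exact ⟨k, fun _ => ⟨hk, hmax⟩⟩
    · exact ⟨Classical.arbitrary κ, fun h' => absurd h' h⟩
  choose lab hlab using hbest
  obtain ⟨y, hy⟩ := exists_potential_of_walkSum_cycle_nonpos
    (E := fun a b => CanShift (u (lab a b)) (J (lab a b)) a b)
    fun _ _ hL => walkSum_gain_cycle_nonpos_of_isMaxOn hu hmax lab hL
  refine ⟨y, fun k i j hk => ?_⟩
  obtain ⟨hlabij, hgain⟩ := hlab i j ⟨k, hk⟩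
  simp only [Pi.add_apply]
  linarith [hy i j hlabij, hgain k hk]

end Prices

theorem stmt_6_general (n K : ℕ) (R : Fin K → ℕ)
    (J : Fin K → Set (Fin n)) (ρ : Fin K → Fin n → ℝ)
    (Δ : Fin K → Set (Fin n → ℝ))
    (hΔ : ∀ k, Δ k = {u : Fin n → ℝ |
      (∀ i, u i ∈ Set.Icc (0 : ℝ) 1) ∧ (∑ i, u i) = (R k : ℝ) ∧ ∀ i ∈ J k, u i = 0})
    (N : Fin n → ℝ) :
    (∃ (y : Fin n → ℝ) (u : Fin K → Fin n → ℝ),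
        (∀ k, u k ∈ Δ k ∧ ∀ v ∈ Δ k,
          ∑ i, (ρ k i + y i) * v i ≤ ∑ i, (ρ k i + y i) * u k i)
        ∧ (∑ k, u k) = N)
    ↔ (∃ u : Fin K → Fin n → ℝ, (∀ k, u k ∈ Δ k) ∧ (∑ k, u k) = N) := by
  obtain rfl : Δ = fun k => cappedSimplex (R k) (J k) := funext hΔ
  refine ⟨fun ⟨y, u, hu, hsum⟩ => ⟨u, fun k => (hu k).1, hsum⟩, fun hN => ?_⟩
  obtain ⟨u, hu, hmax⟩ :=
    (isCompact_allocations (fun k => isCompact_cappedSimplex _ _) N).exists_isMaxOn hN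
      (welfare ρ).continuous_of_finiteDimensional.continuousOn
  obtain ⟨y, hy⟩ := exists_prices_of_isMaxOn hu hmax
  exact ⟨y, u, fun k => ⟨hu.1 k, fun v hv => dotProduct_le_of_forall_canShift (hu.1 k) hv (hy k)⟩,
    hu.2⟩

/-- A real vector `N` can be written as a sum of optimal responses `uₖ ∈ Δₖ`
to some common price vector `y` if and only if `N` lies in the Minkowski sum
`Δ₁ + ⋯ + Δ_K`. -/
theorem stmt_6 (n K : ℕ) (R : Fin K → ℕ) (hR : ∀ k, R k ≤ n)
    (J : Fin K → Set (Fin n)) (ρ : Fin K → Fin n → ℝ)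
    (Δ : Fin K → Set (Fin n → ℝ))
    (hΔ : ∀ k, Δ k = {u : Fin n → ℝ |
      (∀ i, u i ∈ Set.Icc (0 : ℝ) 1) ∧ (∑ i, u i) = (R k : ℝ) ∧ ∀ i ∈ J k, u i = 0})
    (N : Fin n → ℝ) :
    (∃ (y : Fin n → ℝ) (u : Fin K → Fin n → ℝ),
        (∀ k, u k ∈ Δ k ∧ ∀ v ∈ Δ k,
          ∑ i, (ρ k i + y i) * v i ≤ ∑ i, (ρ k i + y i) * u k i)
        ∧ (∑ k, u k) = N)
    ↔ (∃ u : Fin K → Fin n → ℝ, (∀ k, u k ∈ Δ k) ∧ (∑ k, u k) = N) :=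
  stmt_6_general n K R J ρ Δ hΔ N
end

section
/- The set of integer points of the Minkowski sum of the polytopes Δ_1, …, Δ_K equals the Minkowski sum of the sets F_1, …, F_K; that is, (Δ_1 + ⋯ + Δ_K) ∩ ℤ^n = F_1 + ⋯ + F_K. In particular, for every integer vector N ∈ ℤ^n with N ∈ Δ_1 + ⋯ + Δ_K there exist u_k ∈ F_k (k = 1,…,K) with ∑_{k=1}^K u_k = N. -/
/-!
Put the `u_k` as the rows of a `K × n` matrix with entries in `[0, 1]`: its row sums `R_k` and
its column sums `N_i` are integers. Matrices with these entries and line sums, vanishing where the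
given one does, form a compact convex set, so it has an extreme point `w`. A line through a
fractional entry of `w` contains a second one, since its sum is an integer. Hence the set `E` of
fractional entries has at least as many elements as the rows and columns it meets, which is more
than the number of independent line-sum constraints on matrices supported on `E` (one of them is
redundant). A nonzero matrix supported on `E` with vanishing line sums therefore exists, and
moving `w` along it in both directions contradicts extremality. So `w` is a `0/1` matrix, and its
rows lie in the `F_k`.
-/

open Finset

theorem exists_intCast_sum_eq {ι : Type*} {s : Finset ι} {f : ι → ℝ}
    (h : ∀ i ∈ s, ∃ m : ℤ, f i = m) : ∃ m : ℤ, ∑ i ∈ s, f i = m := by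
  have := AddSubgroup.sum_mem (Int.castAddHom ℝ).range fun i hi =>
    (h i hi).imp fun m hm => hm.symm
  exact this.imp fun m hm => hm.symm

theorem exists_ne_mem_Ioo_of_sum_eq_intCast {ι : Type*} [DecidableEq ι] {s : Finset ι}
    {f : ι → ℝ} (hf : ∀ j ∈ s, f j ∈ Set.Icc 0 1) {m : ℤ} (hs : ∑ j ∈ s, f j = m) {i : ι}
    (hi : i ∈ s) (hfi : f i ∈ Set.Ioo 0 1) : ∃ j ∈ s, j ≠ i ∧ f j ∈ Set.Ioo 0 1 := by
  by_contra! h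
  obtain ⟨m', hm'⟩ : ∃ m' : ℤ, ∑ j ∈ s.erase i, f j = m' := by
    refine exists_intCast_sum_eq fun j hj => ?_
    obtain ⟨hji, hj⟩ := mem_erase.mp hj
    obtain ⟨h0, h1⟩ := hf j hj
    rcases h0.eq_or_lt with h0 | h0
    · exact ⟨0, by simp [← h0]⟩
    · exact ⟨1, by simpa using h1.antisymm (not_lt.mp fun h1' => h j hj hji ⟨h0, h1'⟩)⟩
  have hfi' : f i = ((m - m' : ℤ) : ℝ) := by
    push_cast
    rw [← hs, ← add_sum_erase s f hi, hm']
    ring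
  obtain ⟨h0, h1⟩ := hfi
  rw [hfi'] at h0 h1
  have : (0 : ℤ) < m - m' := by exact_mod_cast h0
  have : m - m' < (1 : ℤ) := by exact_mod_cast h1
  omega

theorem Finset.two_mul_card_image_le {ι κ : Type*} [DecidableEq κ] (s : Finset ι) (f : ι → κ)
    (h : ∀ i ∈ s, ∃ j ∈ s, j ≠ i ∧ f j = f i) : 2 * #(s.image f) ≤ #s := by
  rw [card_eq_sum_card_image f s, mul_comm, ← smul_eq_mul, ← sum_const]
  refine sum_le_sum fun y hy => ?_
  obtain ⟨i, hi, rfl⟩ := mem_image.mp hy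
  obtain ⟨j, hj, hji, hfj⟩ := h i hi
  exact one_lt_card.mpr ⟨j, by simp [hj, hfj], i, by simp [hi], hji⟩

theorem Finset.card_image_fst_add_card_image_snd_le {α β : Type*} [DecidableEq α] [DecidableEq β]
    (E : Finset (α × β)) (hrow : ∀ p ∈ E, ∃ q ∈ E, q ≠ p ∧ q.1 = p.1)
    (hcol : ∀ p ∈ E, ∃ q ∈ E, q ≠ p ∧ q.2 = p.2) :
    #(E.image Prod.fst) + #(E.image Prod.snd) ≤ #E := by
  have := E.two_mul_card_image_le Prod.fst hrow
  have := E.two_mul_card_image_le Prod.snd hcol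
  omega

variable {α β : Type*} [Fintype α] [Fintype β]

theorem colSum_eq_zero_of_rowSum_eq_zero {x : α → β → ℝ} (hrow : ∀ a, ∑ b, x a b = 0) {b₀ : β}
    (hcol : ∀ b ≠ b₀, ∑ a, x a b = 0) (b : β) : ∑ a, x a b = 0 := by
  rcases eq_or_ne b b₀ with rfl | hb
  · calc ∑ a, x a b = ∑ b, ∑ a, x a b := (sum_eq_single _ (fun b _ hb => hcol b hb) (by simp)).symm
      _ = 0 := by rw [sum_comm]; exact sum_eq_zero fun a _ => hrow a
  · exact hcol b hb

theorem exists_ne_zero_rowSum_colSum_eq_zero (E : Finset (α × β)) (hE : E.Nonempty)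
    (hrow : ∀ p ∈ E, ∃ q ∈ E, q ≠ p ∧ q.1 = p.1) (hcol : ∀ p ∈ E, ∃ q ∈ E, q ≠ p ∧ q.2 = p.2) :
    ∃ x : α → β → ℝ, x ≠ 0 ∧ (∀ a b, (a, b) ∉ E → x a b = 0) ∧
      (∀ a, ∑ b, x a b = 0) ∧ ∀ b, ∑ a, x a b = 0 := by
  classical
  obtain ⟨p₀, hp₀⟩ := hE
  set rows := E.image Prod.fst
  set cols := (E.image Prod.snd).erase p₀.2
  let Φ : (α → β → ℝ) →ₗ[ℝ] ({p : α × β // p ∉ E} → ℝ) × (rows → ℝ) × (cols → ℝ) :=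
    { toFun x := (fun p => x p.1.1 p.1.2, fun a => ∑ b, x a b, fun b => ∑ a, x a b)
      map_add' x y := by ext <;> simp [sum_add_distrib]
      map_smul' c x := by ext <;> simp [mul_sum] }
  -- The column sum at `p₀.2` is left out: the others and the row sums force it.
  have hdim : Module.finrank ℝ (({p : α × β // p ∉ E} → ℝ) × (rows → ℝ) × (cols → ℝ)) <
      Module.finrank ℝ (α → β → ℝ) := by
    have h₁ := E.card_image_fst_add_card_image_snd_le hrow hcol
    have h₂ : #E ≤ Fintype.card α * Fintype.card β := by
      simpa using card_le_univ E
    have h₃ : 0 < #(E.image Prod.snd) := card_pos.mpr ⟨_, mem_image_of_mem _ hp₀⟩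
    simp only [Module.finrank_prod, Module.finrank_pi_fintype, Module.finrank_self, mul_one,
      Fintype.card_prod, Fintype.card_subtype_compl, Fintype.card_coe, sum_const, card_univ,
      smul_eq_mul, rows, cols, card_erase_of_mem (mem_image_of_mem _ hp₀)]
    omega
  obtain ⟨x, hx, hx0⟩ :=
    (Submodule.ne_bot_iff _).mp (LinearMap.ker_ne_bot_of_finrank_lt (f := Φ) hdim)
  replace hx : (fun p : {p // p ∉ E} => x p.1.1 p.1.2, fun a : rows => ∑ b, x a b,
      fun b : cols => ∑ a, x a b) = 0 := hx
  simp only [Prod.mk_eq_zero, funext_iff, Pi.zero_apply] at hx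
  obtain ⟨hsupp, hrows, hcols⟩ := hx
  have hsupp' : ∀ a b, (a, b) ∉ E → x a b = 0 := fun a b h => hsupp ⟨(a, b), h⟩
  have hrow' : ∀ a, ∑ b, x a b = 0 := by
    intro a
    by_cases ha : a ∈ rows
    · exact hrows ⟨a, ha⟩
    · exact sum_eq_zero fun b _ => hsupp' a b fun h => ha (mem_image_of_mem Prod.fst h)
  have hcol' : ∀ b ≠ p₀.2, ∑ a, x a b = 0 := by
    intro b hb
    by_cases hb' : b ∈ E.image Prod.snd
    · exact hcols ⟨b, mem_erase.mpr ⟨hb, hb'⟩⟩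
    · exact sum_eq_zero fun a _ => hsupp' a b fun h => hb' (mem_image_of_mem Prod.snd h)
  exact ⟨x, hx0, hsupp', hrow', colSum_eq_zero_of_rowSum_eq_zero hrow' hcol'⟩

def transportationPolytope (u : α → β → ℝ) : Set (α → β → ℝ) :=
  {w | (∀ a b, w a b ∈ Set.Icc 0 1) ∧ (∀ a b, u a b = 0 → w a b = 0) ∧
    (∀ a, ∑ b, w a b = ∑ b, u a b) ∧ ∀ b, ∑ a, w a b = ∑ a, u a b}

theorem isCompact_transportationPolytope (u : α → β → ℝ) :
    IsCompact (transportationPolytope u) := by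
  refine (isCompact_univ_pi fun _ => isCompact_univ_pi fun _ => isCompact_Icc (a := (0 : ℝ))
    (b := 1)).of_isClosed_subset ?_ fun w hw =>
      Set.mem_univ_pi.mpr fun a => Set.mem_univ_pi.mpr fun b => hw.1 a b
  simp only [transportationPolytope, Set.ofPred_and, Set.ofPred_forall]
  refine (isClosed_iInter fun a => isClosed_iInter fun b => isClosed_Icc.preimage ?_).inter
    ((isClosed_iInter fun a => isClosed_iInter fun b => isClosed_iInter fun _ =>
      isClosed_eq ?_ continuous_const).inter
    ((isClosed_iInter fun a => isClosed_eq ?_ continuous_const).inter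
      (isClosed_iInter fun b => isClosed_eq ?_ continuous_const))) <;> fun_prop

theorem eventually_add_smul_mem_transportationPolytope {u w x : α → β → ℝ}
    (hw : w ∈ transportationPolytope u) (hx : ∀ a b, x a b ≠ 0 → w a b ∈ Set.Ioo 0 1)
    (hrow : ∀ a, ∑ b, x a b = 0) (hcol : ∀ b, ∑ a, x a b = 0) :
    ∀ᶠ t in nhds (0 : ℝ), w + t • x ∈ transportationPolytope u := by
  obtain ⟨hw01, hwu, hwrow, hwcol⟩ := hw
  have hentry : ∀ a b, ∀ᶠ t in nhds (0 : ℝ), w a b + t * x a b ∈ Set.Icc 0 1 := by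
    intro a b
    by_cases hxab : x a b = 0
    · exact Filter.Eventually.of_forall fun t => by simpa [hxab] using hw01 a b
    · have hcont : Continuous fun t : ℝ => w a b + t * x a b := by fun_prop
      exact ((hcont.tendsto' 0 _ (by simp)).eventually (isOpen_Ioo.mem_nhds (hx a b hxab))).mono
        fun t ht => Set.Ioo_subset_Icc_self ht
  filter_upwards [Filter.eventually_all.mpr fun a => Filter.eventually_all.mpr (hentry a)]
    with t ht
  refine ⟨ht, fun a b hu => ?_, fun a => ?_, fun b => ?_⟩
  · have hx0 : x a b = 0 := by
      by_contra h
      exact (hx a b h).1.ne' (hwu a b hu)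
    simp [hwu a b hu, hx0]
  · simp [sum_add_distrib, ← mul_sum, hrow, hwrow]
  · simp [sum_add_distrib, ← mul_sum, hcol, hwcol]

theorem zero_or_one_of_mem_extremePoints_transportationPolytope {u w : α → β → ℝ}
    (hrow : ∀ a, ∃ m : ℤ, ∑ b, u a b = m) (hcol : ∀ b, ∃ m : ℤ, ∑ a, u a b = m)
    (hw : w ∈ (transportationPolytope u).extremePoints ℝ) (a : α) (b : β) :
    w a b = 0 ∨ w a b = 1 := by
  classical
  obtain ⟨⟨hw01, hwu, hwrow, hwcol⟩, hext⟩ := mem_extremePoints.mp hw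
  by_contra! hab
  set E := univ.filter fun p : α × β => w p.1 p.2 ∈ Set.Ioo 0 1
  have hE : E.Nonempty :=
    ⟨(a, b), mem_filter.mpr ⟨mem_univ _, (hw01 a b).1.lt_of_ne' hab.1,
      (hw01 a b).2.lt_of_ne hab.2⟩⟩
  obtain ⟨x, hx0, hxE, hxrow, hxcol⟩ := exists_ne_zero_rowSum_colSum_eq_zero E hE
    (fun p hp => by
      obtain ⟨m, hm⟩ := hrow p.1
      obtain ⟨j, -, hj, hjE⟩ := exists_ne_mem_Ioo_of_sum_eq_intCast
        (fun j _ => hw01 p.1 j) ((hwrow p.1).trans hm) (mem_univ p.2) (mem_filter.mp hp).2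
      exact ⟨(p.1, j), mem_filter.mpr ⟨mem_univ _, hjE⟩, fun h => hj (congrArg Prod.snd h), rfl⟩)
    (fun p hp => by
      obtain ⟨m, hm⟩ := hcol p.2
      obtain ⟨i, -, hi, hiE⟩ := exists_ne_mem_Ioo_of_sum_eq_intCast
        (fun i _ => hw01 i p.2) ((hwcol p.2).trans hm) (mem_univ p.1) (mem_filter.mp hp).2
      exact ⟨(i, p.2), mem_filter.mpr ⟨mem_univ _, hiE⟩, fun h => hi (congrArg Prod.fst h), rfl⟩)
  have hxw : ∀ a b, x a b ≠ 0 → w a b ∈ Set.Ioo 0 1 := fun a b h => by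
    by_contra h'
    exact h (hxE a b fun hE => h' (mem_filter.mp hE).2)
  have hP : w ∈ transportationPolytope u := ⟨hw01, hwu, hwrow, hwcol⟩
  obtain ⟨t, ht, hplus, hminus⟩ :=
    ((eventually_add_smul_mem_transportationPolytope hP hxw hxrow hxcol).and
      (eventually_add_smul_mem_transportationPolytope (x := -x) hP
        (fun a b h => hxw a b (by simpa using h)) (by simpa using hxrow)
        (by simpa using hxcol))).exists_gt
  have hmid : w ∈ openSegment ℝ (w + t • x) (w + t • -x) :=
    ⟨1 / 2, 1 / 2, by norm_num, by norm_num, by norm_num, by module⟩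
  have := (hext _ hplus _ hminus hmid).1
  exact hx0 ((smul_eq_zero.mp (add_eq_left.mp this)).resolve_left ht.ne')

theorem exists_zero_one_mem_transportationPolytope (u : α → β → ℝ)
    (hu : ∀ a b, u a b ∈ Set.Icc 0 1) (hrow : ∀ a, ∃ m : ℤ, ∑ b, u a b = m)
    (hcol : ∀ b, ∃ m : ℤ, ∑ a, u a b = m) :
    ∃ v ∈ transportationPolytope u, ∀ a b, v a b = 0 ∨ v a b = 1 := by
  obtain ⟨v, hv⟩ := (isCompact_transportationPolytope u).extremePoints_nonempty
    ⟨u, hu, fun _ _ h => h, fun _ => rfl, fun _ => rfl⟩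
  exact ⟨v, hv.1, zero_or_one_of_mem_extremePoints_transportationPolytope hrow hcol hv⟩

theorem stmt_7_general (n K : ℕ) (R : Fin K → ℕ)
    (J : Fin K → Set (Fin n))
    (F Δ : Fin K → Set (Fin n → ℝ))
    (hF : ∀ k, F k = {u : Fin n → ℝ |
      (∀ i, u i = 0 ∨ u i = 1) ∧ (∑ i, u i) = (R k : ℝ) ∧ ∀ i ∈ J k, u i = 0})
    (hΔ : ∀ k, Δ k = {u : Fin n → ℝ |
      (∀ i, u i ∈ Set.Icc (0 : ℝ) 1) ∧ (∑ i, u i) = (R k : ℝ) ∧ ∀ i ∈ J k, u i = 0}) :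
    ({N : Fin n → ℝ |
        (∃ u : Fin K → Fin n → ℝ, (∀ k, u k ∈ Δ k) ∧ (∑ k, u k) = N)
        ∧ ∀ i, ∃ m : ℤ, N i = (m : ℝ)}
      = {N : Fin n → ℝ |
        ∃ u : Fin K → Fin n → ℝ, (∀ k, u k ∈ F k) ∧ (∑ k, u k) = N})
    ∧ ∀ N : Fin n → ℝ, (∀ i, ∃ m : ℤ, N i = (m : ℝ)) →
        (∃ u : Fin K → Fin n → ℝ, (∀ k, u k ∈ Δ k) ∧ (∑ k, u k) = N) →
        ∃ u : Fin K → Fin n → ℝ, (∀ k, u k ∈ F k) ∧ (∑ k, u k) = N := by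
  have decompose : ∀ N : Fin n → ℝ, (∀ i, ∃ m : ℤ, N i = (m : ℝ)) →
      (∃ u : Fin K → Fin n → ℝ, (∀ k, u k ∈ Δ k) ∧ (∑ k, u k) = N) →
      ∃ u : Fin K → Fin n → ℝ, (∀ k, u k ∈ F k) ∧ (∑ k, u k) = N := by
    rintro N hN ⟨u, hu, rfl⟩
    simp only [hΔ, Set.mem_ofPred_eq] at hu
    obtain ⟨v, ⟨-, hvu, hvrow, hvcol⟩, hv01⟩ := exists_zero_one_mem_transportationPolytope u
      (fun k => (hu k).1) (fun k => ⟨R k, (hu k).2.1⟩) (fun i => by simpa using hN i)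
    refine ⟨v, fun k => ?_, funext fun i => by simpa using hvcol i⟩
    rw [hF]
    exact ⟨hv01 k, (hvrow k).trans (hu k).2.1, fun i hi => hvu k i ((hu k).2.2 i hi)⟩
  refine ⟨Set.ext fun N => ⟨fun ⟨hu, hN⟩ => decompose N hN hu, ?_⟩, decompose⟩
  rintro ⟨u, hu, rfl⟩
  simp only [hF, Set.mem_ofPred_eq] at hu
  refine ⟨⟨u, fun k => ?_, rfl⟩, fun i => ?_⟩
  · rw [hΔ]
    exact ⟨fun i => by rcases (hu k).1 i with h | h <;> simp [h], (hu k).2⟩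
  · simpa using exists_intCast_sum_eq fun k _ => by
      rcases (hu k).1 i with h | h
      exacts [⟨0, by simp [h]⟩, ⟨1, by simp [h]⟩]

/-- The integer points of the Minkowski sum `Δ₁ + ⋯ + Δ_K` are exactly the
Minkowski sum `F₁ + ⋯ + F_K`; in particular every integer vector in
`Δ₁ + ⋯ + Δ_K` decomposes as a sum of elements of the `Fₖ`. -/
theorem stmt_7 (n K : ℕ) (R : Fin K → ℕ) (hR : ∀ k, R k ≤ n)
    (J : Fin K → Set (Fin n))
    (F Δ : Fin K → Set (Fin n → ℝ))
    (hF : ∀ k, F k = {u : Fin n → ℝ |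
      (∀ i, u i = 0 ∨ u i = 1) ∧ (∑ i, u i) = (R k : ℝ) ∧ ∀ i ∈ J k, u i = 0})
    (hΔ : ∀ k, Δ k = {u : Fin n → ℝ |
      (∀ i, u i ∈ Set.Icc (0 : ℝ) 1) ∧ (∑ i, u i) = (R k : ℝ) ∧ ∀ i ∈ J k, u i = 0}) :
    ({N : Fin n → ℝ |
        (∃ u : Fin K → Fin n → ℝ, (∀ k, u k ∈ Δ k) ∧ (∑ k, u k) = N)
        ∧ ∀ i, ∃ m : ℤ, N i = (m : ℝ)}
      = {N : Fin n → ℝ |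
        ∃ u : Fin K → Fin n → ℝ, (∀ k, u k ∈ F k) ∧ (∑ k, u k) = N})
    ∧ ∀ N : Fin n → ℝ, (∀ i, ∃ m : ℤ, N i = (m : ℝ)) →
        (∃ u : Fin K → Fin n → ℝ, (∀ k, u k ∈ Δ k) ∧ (∑ k, u k) = N) →
        ∃ u : Fin K → Fin n → ℝ, (∀ k, u k ∈ F k) ∧ (∑ k, u k) = N :=
  stmt_7_general n K R J F Δ hF hΔ
end

section
/- A vector N ∈ ℤ^n is feasible — i.e., there exist y ∈ ℝ^n and vectors u_1, …, u_K with each u_k ∈ F_k maximizing v ↦ ⟨ρ_k + y, v⟩ over F_k and ∑_{k=1}^K u_k = N — if and only if N belongs to the Minkowski sum F_1 + ⋯ + F_K. -/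
/-!
Take a decomposition `N = ∑ₖ uₖ` with `uₖ ∈ Fₖ` maximising `∑ₖ ⟨ρₖ, uₖ⟩`. Customer `k` can swap
item `i` for item `j` when `uₖ i = 1`, `uₖ j = 0` and `j ∉ Jₖ`, at a loss `ρₖ i - ρₖ j`. Swapping
along a cycle of items keeps a decomposition of `N`, so by maximality every cycle of swaps has
nonnegative total loss. Shortest simple paths for these losses then give prices `y` with
`y j ≤ y i + ρₖ i - ρₖ j` for every possible swap, and for 0/1 vectors with a fixed number of
ones this exchange condition already makes `uₖ` optimal for `ρₖ + y`.
-/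

open Finset

section Potential

variable {V : Type*}

def pathCost (c : V → V → ℝ) : List V → ℝ
  | x :: y :: l => c x y + pathCost c (y :: l)
  | _ => 0

theorem pathCost_append_cons (c : V → V → ℝ) (l₁ : List V) (x : V) (l₂ : List V) :
    pathCost c (l₁ ++ x :: l₂) = pathCost c (l₁ ++ [x]) + pathCost c (x :: l₂) := by
  induction l₁ using List.twoStepInduction with
  | nil => simp [pathCost]
  | singleton a => cases l₂ <;> simp [pathCost]
  | cons_cons a b l _ ih => simp_all [pathCost, add_assoc]

theorem pathCost_cons_append_singleton (c : V → V → ℝ) (a : V) (l : List V) (b : V) :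
    pathCost c (a :: l ++ [b]) = (List.zipWith c (a :: l) (l ++ [b])).sum := by
  induction l generalizing a with
  | nil => simp [pathCost]
  | cons x l ih => simp [pathCost, ← ih]

/-- A family of disjoint cycles is encoded by a permutation `σ` of a finite set `s`, each
`x ∈ s` being followed by `σ x`; loops are the fixed points of `σ` in `s`. -/
def NoNegativeCycles (Arc : V → V → Prop) (c : V → V → ℝ) : Prop :=
  ∀ (σ : Equiv.Perm V) (s : Finset V), {x | σ x ≠ x} ⊆ s →
    (∀ x ∈ s, Arc x (σ x)) → 0 ≤ ∑ x ∈ s, c x (σ x)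

variable [DecidableEq V]

theorem List.map_formPerm_of_nodup {l : List V} (hl : l.Nodup) :
    l.map l.formPerm = l.rotate 1 := by
  rw [← List.pmap_next_eq_rotate_one l hl, ← List.pmap_eq_map (fun _ h => h)]
  exact List.pmap_congr_left _ fun x hx _ _ => List.formPerm_apply_mem_eq_next hl x hx

variable {v : V} {l : List V}

theorem map_formPerm_cons (hl : (v :: l).Nodup) : (v :: l).map (v :: l).formPerm = l ++ [v] := by
  simpa using List.map_formPerm_of_nodup hl

theorem pathCost_cycle_eq_sum (c : V → V → ℝ) (hl : (v :: l).Nodup) :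
    pathCost c (v :: l ++ [v]) = ∑ x ∈ (v :: l).toFinset, c x ((v :: l).formPerm x) := by
  rw [List.sum_toFinset _ hl, pathCost_cons_append_singleton, ← map_formPerm_cons hl,
    List.zipWith_map_right, List.zipWith_self]

theorem isChain_cycle_iff (Arc : V → V → Prop) (hl : (v :: l).Nodup) :
    (v :: l ++ [v]).IsChain Arc ↔ ∀ x ∈ v :: l, Arc x ((v :: l).formPerm x) := by
  rw [List.isChain_cons_append_singleton_iff_forall₂, ← map_formPerm_cons hl,
    List.forall₂_map_right_iff, List.forall₂_same]

variable {Arc : V → V → Prop} {c : V → V → ℝ}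

theorem NoNegativeCycles.pathCost_cycle_nonneg (hc : NoNegativeCycles Arc c)
    (hl : (v :: l).Nodup) (hchain : (v :: l ++ [v]).IsChain Arc) :
    0 ≤ pathCost c (v :: l ++ [v]) := by
  rw [pathCost_cycle_eq_sum c hl]
  refine hc _ _ (fun x hx => ?_) fun x hx => (isChain_cycle_iff Arc hl).1 hchain x ?_
  · simpa using List.mem_of_formPerm_apply_ne hx
  · simpa using hx

/-- If `j` already lies on the path, cutting off the cycle through `j` does not increase the
cost. -/
theorem NoNegativeCycles.exists_path_le (hc : NoNegativeCycles Arc c) {p : List V} {i j : V}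
    (hnd : (p ++ [i]).Nodup) (hchain : (p ++ [i]).IsChain Arc) (hij : Arc i j) :
    ∃ q : List V, (q ++ [j]).Nodup ∧ (q ++ [j]).IsChain Arc ∧
      pathCost c (q ++ [j]) ≤ pathCost c (p ++ [i]) + c i j := by
  by_cases hji : j = i
  · subst hji
    refine ⟨p, hnd, hchain, ?_⟩
    simpa [pathCost] using hc.pathCost_cycle_nonneg (l := []) (by simp) (by simpa using hij)
  by_cases hjp : j ∈ p
  · obtain ⟨a, b, rfl⟩ := List.append_of_mem hjp
    obtain ⟨hpre, hcyc_path⟩ := List.isChain_split.1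
      (by simpa using hchain : (a ++ j :: (b ++ [i])).IsChain Arc)
    have hcyc_chain : (j :: (b ++ [i]) ++ [j]).IsChain Arc := by
      rw [show j :: (b ++ [i]) ++ [j] = (j :: b) ++ i :: j :: [] by simp]
      exact List.isChain_append_cons_cons.2 ⟨by simpa using hcyc_path, hij, .singleton j⟩
    have hcyc := hc.pathCost_cycle_nonneg (hnd.sublist (by simp)) hcyc_chain
    have hsplit := pathCost_append_cons c a j (b ++ [i])
    have hclose := pathCost_append_cons c (j :: b) i [j]
    refine ⟨a, hnd.sublist (by simp), hpre, ?_⟩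
    simp only [List.append_assoc, List.cons_append, List.nil_append, pathCost, add_zero]
      at hsplit hclose hcyc ⊢
    linarith
  · refine ⟨p ++ [i], List.nodup_append.2 ⟨hnd, List.nodup_singleton j, by grind⟩,
      hchain.append (.singleton _) (by simpa), ?_⟩
    simp [pathCost_append_cons c p i [j], pathCost]

theorem NoNegativeCycles.exists_potential [Fintype V] (hc : NoNegativeCycles Arc c) :
    ∃ y : V → ℝ, ∀ i j, Arc i j → y j ≤ y i + c i j := by
  have hfin : {l : List V | l.Nodup}.Finite :=
    Set.finite_coe_iff.mp (Finite.of_fintype {l : List V // l.Nodup})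
  have hbest (j : V) := Set.exists_min_image {l | (l ++ [j]).Nodup ∧ (l ++ [j]).IsChain Arc}
    (fun l => pathCost c (l ++ [j])) (hfin.subset fun l hl => hl.1.sublist (by simp))
    ⟨[], by simp⟩
  choose best hbest_mem hbest_le using hbest
  refine ⟨fun j => pathCost c (best j ++ [j]), fun i j hij => ?_⟩
  obtain ⟨q, hqnd, hqchain, hq⟩ := hc.exists_path_le (hbest_mem i).1 (hbest_mem i).2 hij
  exact (hbest_le j q ⟨hqnd, hqchain⟩).trans hq

end Potential

section Responses

variable {ι : Type*} [Fintype ι]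

def responseSet (r : ℕ) (J : Set ι) : Set (ι → ℝ) :=
  {u | (∀ i, u i = 0 ∨ u i = 1) ∧ (∑ i, u i) = (r : ℝ) ∧ ∀ i ∈ J, u i = 0}

theorem responseSet_finite (r : ℕ) (J : Set ι) : (responseSet r J).Finite :=
  (Set.Finite.pi fun _ => (Set.finite_singleton (1 : ℝ)).insert 0).subset
    fun u hu i _ => by rcases hu.1 i with h | h <;> simp [h]

theorem isMaxOn_responseSet {r : ℕ} {J : Set ι} {u w : ι → ℝ} (hu : u ∈ responseSet r J)
    (hw : ∀ i j, u i = 1 → u j = 0 → j ∉ J → w j ≤ w i) :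
    IsMaxOn (fun v => ∑ i, w i * v i) (responseSet r J) u := by
  obtain ⟨hu01, husum, -⟩ := hu
  obtain ⟨t, ht_le, hle_t⟩ : ∃ t, (∀ i, u i = 1 → t ≤ w i) ∧ ∀ j, u j = 0 → j ∉ J → w j ≤ t := by
    by_cases h : ∃ i, u i = 1
    · obtain ⟨i₁, hi₁⟩ := h
      obtain ⟨i₀, hi₀, hmin⟩ := (univ.filter (u · = 1)).exists_min_image w ⟨i₁, by simpa using hi₁⟩
      exact ⟨w i₀, fun i hi => hmin i (by simpa using hi),
        fun j hj hJ => hw i₀ j (by simpa using hi₀) hj hJ⟩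
    · obtain ⟨t, ht⟩ := Finite.bddAbove_range w
      exact ⟨t, fun i hi => (h ⟨i, hi⟩).elim, fun j _ _ => ht ⟨j, rfl⟩⟩
  refine isMaxOn_iff.2 fun v ⟨hv01, hvsum, hvJ⟩ => ?_
  -- Subtracting the constant price `t` does not affect the comparison, as `∑ v = ∑ u`.
  have hshift : ∑ i, w i * v i - ∑ i, w i * u i = ∑ i, (w i - t) * (v i - u i) := by
    simp only [mul_sub, sub_mul, sum_sub_distrib, ← mul_sum, hvsum, husum]
    ring
  have hterm : ∀ i, (w i - t) * (v i - u i) ≤ 0 := by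
    intro i
    rcases hu01 i with hui | hui <;> rcases hv01 i with hvi | hvi
    · simp [hui, hvi]
    · have : w i ≤ t := hle_t i hui fun hJ => by simp [hvJ i hJ] at hvi
      rw [hui, hvi]; linarith
    · have := ht_le i hui
      rw [hui, hvi]; linarith
    · simp [hui, hvi]
  linarith [sum_nonpos (s := univ) fun i _ => hterm i]

end Responses

section CycleExchange

variable {ι κ : Type*} [DecidableEq ι] [DecidableEq κ]

/-- Customer `ch x` gives up item `x` and takes item `σ x`, for every `x ∈ s`. -/
def cycleExchange (u : κ → ι → ℝ) (σ : Equiv.Perm ι) (s : Finset ι) (ch : ι → κ) :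
    κ → ι → ℝ := fun k i =>
  u k i + (if σ.symm i ∈ s ∧ ch (σ.symm i) = k then 1 else 0) - (if i ∈ s ∧ ch i = k then 1 else 0)

variable {u : κ → ι → ℝ} {σ : Equiv.Perm ι} {s : Finset ι} {ch : ι → κ}

theorem sum_cycleExchange [Fintype κ] (hs : {x | σ x ≠ x} ⊆ s) :
    ∑ k, cycleExchange u σ s ch k = ∑ k, u k := by
  ext i
  have hmem : σ.symm i ∈ s ↔ i ∈ s := by
    by_cases h : σ.symm i = i
    · rw [h]
    · have hi : σ i ≠ i := fun hi => h (σ.symm_apply_eq.2 hi.symm)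
      exact iff_of_true (hs (by simpa using Ne.symm h)) (hs hi)
  simp [cycleExchange, sum_add_distrib, sum_sub_distrib, ite_and, hmem]

variable [Fintype ι]

theorem cycleExchange_mem_responseSet {k : κ} {r : ℕ} {J : Set ι} (hu : u k ∈ responseSet r J)
    (hch : ∀ x ∈ s, ch x = k → u k x = 1 ∧ u k (σ x) = 0 ∧ σ x ∉ J) :
    cycleExchange u σ s ch k ∈ responseSet r J := by
  obtain ⟨hu01, husum, huJ⟩ := hu
  have hout : ∀ i, i ∈ s ∧ ch i = k → u k i = 1 := fun i hi => (hch i hi.1 hi.2).1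
  have hin : ∀ i, σ.symm i ∈ s ∧ ch (σ.symm i) = k → u k i = 0 ∧ i ∉ J := fun i hi => by
    simpa using (hch _ hi.1 hi.2).2
  refine ⟨fun i => ?_, ?_, fun i hiJ => ?_⟩
  · unfold cycleExchange
    by_cases hA : i ∈ s ∧ ch i = k <;> by_cases hB : σ.symm i ∈ s ∧ ch (σ.symm i) = k
    · exact absurd ((hin i hB).1.symm.trans (hout i hA)) zero_ne_one
    · simp [hA, hB, hout i hA]
    · simp [hA, hB, (hin i hB).1]
    · simp [hA, hB, hu01 i]
  · have hshift : ∑ i, (if σ.symm i ∈ s ∧ ch (σ.symm i) = k then (1 : ℝ) else 0) =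
        ∑ i, (if i ∈ s ∧ ch i = k then (1 : ℝ) else 0) :=
      Equiv.sum_comp σ.symm fun i => if i ∈ s ∧ ch i = k then (1 : ℝ) else 0
    simp only [cycleExchange, sum_sub_distrib, sum_add_distrib, hshift, husum]
    ring
  · have hA : ¬(i ∈ s ∧ ch i = k) := fun hA =>
      zero_ne_one ((huJ i hiJ).symm.trans (hout i hA))
    have hB : ¬(σ.symm i ∈ s ∧ ch (σ.symm i) = k) := fun hB => (hin i hB).2 hiJ
    simp [cycleExchange, hA, hB, huJ i hiJ]

theorem weight_cycleExchange [Fintype κ] (ρ : κ → ι → ℝ) :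
    ∑ k, ∑ i, ρ k i * cycleExchange u σ s ch k i =
      ∑ k, ∑ i, ρ k i * u k i + ∑ x ∈ s, (ρ (ch x) (σ x) - ρ (ch x) x) := by
  have hcollect (f : ι → ι) : ∑ k, ∑ i, ρ k i * (if f i ∈ s ∧ ch (f i) = k then 1 else 0) =
      ∑ i, if f i ∈ s then ρ (ch (f i)) i else 0 := by
    rw [sum_comm]
    refine sum_congr rfl fun i _ => ?_
    by_cases hi : f i ∈ s <;> simp [hi]
  have hin : ∑ i, (if σ.symm i ∈ s then ρ (ch (σ.symm i)) i else 0) =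
      ∑ x ∈ s, ρ (ch x) (σ x) := by
    rw [← Equiv.sum_comp σ, ← sum_filter]
    simp
  simp only [cycleExchange, mul_sub, mul_add, sum_add_distrib, sum_sub_distrib, hcollect, hin]
  simp [add_sub_assoc]

end CycleExchange

section Swaps

variable {ι κ : Type*} [Finite κ] {J : κ → Set ι} {ρ : κ → ι → ℝ} {u : κ → ι → ℝ}

def CanSwap (J : κ → Set ι) (u : κ → ι → ℝ) (k : κ) (i j : ι) : Prop :=
  u k i = 1 ∧ u k j = 0 ∧ j ∉ J k

/-- Junk value `0` when no customer can make the swap. -/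
noncomputable def swapCost (J : κ → Set ι) (ρ : κ → ι → ℝ) (u : κ → ι → ℝ) (i j : ι) : ℝ :=
  ⨅ k : {k // CanSwap J u k i j}, (ρ k i - ρ k j)

theorem swapCost_le {k : κ} {i j : ι} (h : CanSwap J u k i j) :
    swapCost J ρ u i j ≤ ρ k i - ρ k j :=
  ciInf_le (Finite.bddBelow_range _) (⟨k, h⟩ : {k // CanSwap J u k i j})

theorem exists_swapCost_eq {i j : ι} (h : ∃ k, CanSwap J u k i j) :
    ∃ k, CanSwap J u k i j ∧ swapCost J ρ u i j = ρ k i - ρ k j := by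
  have : Nonempty {k // CanSwap J u k i j} := let ⟨k, hk⟩ := h; ⟨⟨k, hk⟩⟩
  obtain ⟨⟨k, hk⟩, hmin⟩ :=
    exists_eq_ciInf_of_finite (f := fun k : {k // CanSwap J u k i j} => ρ k i - ρ k j)
  exact ⟨k, hk, hmin.symm⟩

end Swaps

section Decompositions

variable {ι κ : Type*} [Fintype ι] [Fintype κ]

def decompositions (R : κ → ℕ) (J : κ → Set ι) (N : ι → ℝ) : Set (κ → ι → ℝ) :=
  {w | (∀ k, w k ∈ responseSet (R k) (J k)) ∧ ∑ k, w k = N}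

theorem decompositions_finite (R : κ → ℕ) (J : κ → Set ι) (N : ι → ℝ) :
    (decompositions R J N).Finite :=
  (Set.Finite.pi fun k => responseSet_finite (R k) (J k)).subset fun _ hw k _ => hw.1 k

theorem noNegativeCycles_swapCost [DecidableEq ι] [DecidableEq κ] {R : κ → ℕ} {J : κ → Set ι}
    {ρ : κ → ι → ℝ} {N : ι → ℝ} {u : κ → ι → ℝ} (hu : u ∈ decompositions R J N)
    (hmax : IsMaxOn (fun w => ∑ k, ∑ i, ρ k i * w k i) (decompositions R J N) u) :
    NoNegativeCycles (fun i j => ∃ k, CanSwap J u k i j) (swapCost J ρ u) := by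
  intro σ s hs harc
  rcases s.eq_empty_or_nonempty with rfl | ⟨x₀, hx₀⟩
  · simp
  obtain ⟨k₀, -⟩ := harc x₀ hx₀
  have : Nonempty κ := ⟨k₀⟩
  choose! ch hch hcost using fun x hx => exists_swapCost_eq (ρ := ρ) (harc x hx)
  have hmem : cycleExchange u σ s ch ∈ decompositions R J N :=
    ⟨fun k => cycleExchange_mem_responseSet (hu.1 k) fun x hx hk => hk ▸ hch x hx,
      (sum_cycleExchange hs).trans hu.2⟩
  have hgain := isMaxOn_iff.1 hmax _ hmem
  rw [weight_cycleExchange, add_le_iff_nonpos_right] at hgain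
  calc 0 ≤ -∑ x ∈ s, (ρ (ch x) (σ x) - ρ (ch x) x) := neg_nonneg.2 hgain
    _ = ∑ x ∈ s, swapCost J ρ u x (σ x) := by
      rw [← sum_neg_distrib]
      exact sum_congr rfl fun x hx => by rw [hcost x hx, neg_sub]

end Decompositions

theorem stmt_8_general (n K : ℕ) (R : Fin K → ℕ)
    (J : Fin K → Set (Fin n)) (ρ : Fin K → Fin n → ℝ)
    (F : Fin K → Set (Fin n → ℝ))
    (hF : ∀ k, F k = {u : Fin n → ℝ |
      (∀ i, u i = 0 ∨ u i = 1) ∧ (∑ i, u i) = (R k : ℝ) ∧ ∀ i ∈ J k, u i = 0})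
    (N : Fin n → ℝ) :
    (∃ (y : Fin n → ℝ) (u : Fin K → Fin n → ℝ),
        (∀ k, u k ∈ F k ∧ ∀ v ∈ F k,
          ∑ i, (ρ k i + y i) * v i ≤ ∑ i, (ρ k i + y i) * u k i)
        ∧ (∑ k, u k) = N)
    ↔ (∃ u : Fin K → Fin n → ℝ, (∀ k, u k ∈ F k) ∧ (∑ k, u k) = N) := by
  obtain rfl : F = fun k => responseSet (R k) (J k) := funext hF
  refine ⟨fun ⟨_, u, hu, hsum⟩ => ⟨u, fun k => (hu k).1, hsum⟩, fun hu₀ => ?_⟩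
  obtain ⟨u, hu, hmax⟩ := Set.exists_max_image _ (fun w => ∑ k, ∑ i, ρ k i * w k i)
    (decompositions_finite R J N) hu₀
  obtain ⟨y, hy⟩ := (noNegativeCycles_swapCost hu (isMaxOn_iff.2 hmax)).exists_potential
  refine ⟨y, u, fun k => ⟨hu.1 k, isMaxOn_iff.1 (isMaxOn_responseSet (hu.1 k) ?_)⟩, hu.2⟩
  intro i j hi hj hJ
  linarith [hy i j ⟨k, hi, hj, hJ⟩, swapCost_le (ρ := ρ) (⟨hi, hj, hJ⟩ : CanSwap J u k i j)]

/-- An integer vector `N` is feasible (i.e. it is the sum of optimal responses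
`uₖ ∈ Fₖ` of the `K` customers to some common price vector `y`) if and only if
`N` belongs to the Minkowski sum `F₁ + ⋯ + F_K`. -/
theorem stmt_8 (n K : ℕ) (R : Fin K → ℕ) (hR : ∀ k, R k ≤ n)
    (J : Fin K → Set (Fin n)) (ρ : Fin K → Fin n → ℝ)
    (F : Fin K → Set (Fin n → ℝ))
    (hF : ∀ k, F k = {u : Fin n → ℝ |
      (∀ i, u i = 0 ∨ u i = 1) ∧ (∑ i, u i) = (R k : ℝ) ∧ ∀ i ∈ J k, u i = 0})
    (N : Fin n → ℝ) (hNint : ∀ i, ∃ m : ℤ, N i = (m : ℝ)) :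
    (∃ (y : Fin n → ℝ) (u : Fin K → Fin n → ℝ),
        (∀ k, u k ∈ F k ∧ ∀ v ∈ F k,
          ∑ i, (ρ k i + y i) * v i ≤ ∑ i, (ρ k i + y i) * u k i)
        ∧ (∑ k, u k) = N)
    ↔ (∃ u : Fin K → Fin n → ℝ, (∀ k, u k ∈ F k) ∧ (∑ k, u k) = N) :=
  stmt_8_general n K R J ρ F hF N
end

section
/- Let u_1*, …, u_K* with u_k* ∈ Δ_k for each k, and set N = ∑_{k=1}^K u_k*. Then the following are equivalent: (1) there exists y ∈ ℝ^n such that for each k, u_k* maximizes v ↦ ⟨ρ_k + y, v⟩ over Δ_k; (2) ∑_{k=1}^K ⟨ρ_k, u_k*⟩ = sup { ∑_{k=1}^K ⟨ρ_k, v_k⟩ : v_k ∈ Δ_k for each k and ∑_{k=1}^K v_k = N }, i.e. the u_k* realize the minimum in the infimal convolution ψ of the functions φ_k(u) = −⟨ρ_k, u⟩ + χ_{Δ_k}(u) at the point N. -/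
/-!
If every `u k` maximizes `⟨ρ k + y, ·⟩` on `Δ k`, then summing over `k` and using
`∑ k, v k = ∑ k, u k` makes the price terms cancel, so `u` solves the coupled problem.

Conversely, the product of the sets `Δ k` is a polyhedron, i.e. it is cut out by finitely many
linear inequalities, and the coupling constraint `∑ k, v k = N` adds finitely many more. By Farkas'
lemma, at a maximizer of a linear function on a polyhedron the objective is a nonnegative
combination of the active constraints (the KKT conditions). The multipliers of the coupling
constraint form the price vector `y`, and what remains of the objective is maximized on the whole
product. That problem splits into one problem for each `k`.
-/

open Filter Topology

section Farkas

variable {E : Type*} [AddCommGroup E] [Module ℝ E]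

theorem exists_nonneg_sum_insert_smul {M ι : Type*} [AddCommMonoid M] [Module ℝ M]
    [DecidableEq ι] {s : Finset ι} {m : ι} (hm : m ∉ s) (f : ι → M) {t : ι → ℝ}
    (ht : ∀ j ∈ s, 0 ≤ t j) {c : ℝ} (hc : 0 ≤ c) :
    ∃ t' : ι → ℝ, (∀ j ∈ insert m s, 0 ≤ t' j) ∧
      ∑ j ∈ insert m s, t' j • f j = c • f m + ∑ j ∈ s, t j • f j := by
  have hne : ∀ j ∈ s, j ≠ m := fun j hj => ne_of_mem_of_not_mem hj hm
  refine ⟨Function.update t m c, Finset.forall_mem_insert _ _ _ |>.mpr ⟨by simpa using hc,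
    fun j hj => by simpa [hne j hj] using ht j hj⟩, ?_⟩
  rw [Finset.sum_insert hm, Function.update_self]
  exact congrArg _ (Finset.sum_congr rfl fun j hj => by rw [Function.update_of_ne (hne j hj)])

theorem Module.Dual.farkas {ι : Type*} (s : Finset ι) (f : ι → Module.Dual ℝ E)
    (g : Module.Dual ℝ E) :
    (∃ t : ι → ℝ, (∀ j ∈ s, 0 ≤ t j) ∧ g = ∑ j ∈ s, t j • f j) ∨
      ∃ x, (∀ j ∈ s, f j x ≤ 0) ∧ 0 < g x := by
  classical
  induction s using Finset.induction_on generalizing f g with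
  | empty =>
    by_cases hg : g = 0
    · exact .inl ⟨0, by simp, by simp [hg]⟩
    · obtain ⟨x, hx⟩ := DFunLike.ne_iff.mp hg
      exact .inr ⟨g x • x, by simp, by simpa using mul_self_pos.2 hx⟩
  | insert m s hm ih =>
    obtain ⟨t, ht, hg⟩ | ⟨x, hx, hgx⟩ := ih f g
    · obtain ⟨t', ht', hsum⟩ := exists_nonneg_sum_insert_smul hm f ht le_rfl
      exact .inl ⟨t', ht', by rw [hsum, zero_smul, zero_add, hg]⟩
    by_cases hmx : f m x ≤ 0
    · exact .inr ⟨x, Finset.forall_mem_insert _ _ _ |>.mpr ⟨hmx, hx⟩, hgx⟩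
    set a := f m x
    have ha : 0 < a := not_le.mp hmx
    -- `π` projects along `f m` onto the functionals vanishing at `x`
    let π : Module.Dual ℝ E →ₗ[ℝ] Module.Dual ℝ E :=
      LinearMap.id - (Module.Dual.eval ℝ E x).smulRight (a⁻¹ • f m)
    have hπ : ∀ h y, π h y = h y - h x * a⁻¹ * f m y := by
      intro h y
      simp [π, mul_assoc]
    obtain ⟨t, ht, hg'⟩ | ⟨z, hz, hgz⟩ := ih (π ∘ f) (π g)
    · set h := ∑ j ∈ s, t j • f j
      have hπg : π g = π h := by simp [hg', h, map_sum, map_smul]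
      have hhx : h x ≤ 0 := by
        simp only [h, LinearMap.sum_apply, LinearMap.smul_apply, smul_eq_mul]
        exact Finset.sum_nonpos fun j hj => mul_nonpos_of_nonneg_of_nonpos (ht j hj) (hx j hj)
      obtain ⟨t', ht', hsum⟩ := exists_nonneg_sum_insert_smul hm f ht
        (c := (g x - h x) / a) (div_nonneg (by linarith) ha.le)
      refine .inl ⟨t', ht', ?_⟩
      ext y
      have := LinearMap.congr_fun hπg y
      rw [hπ, hπ] at this
      simp only [hsum, LinearMap.add_apply, LinearMap.smul_apply, smul_eq_mul]
      linear_combination this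
    · have hπz : ∀ h : Module.Dual ℝ E, h (z - (f m z / a) • x) = π h z := fun h => by
        simp only [hπ, map_sub, map_smul, smul_eq_mul]
        ring
      refine .inr ⟨z - (f m z / a) • x, Finset.forall_mem_insert _ _ _ |>.mpr
        ⟨(hπz _).trans_le ?_, fun j hj => (hπz _).trans_le (hz j hj)⟩, (hπz g).symm ▸ hgz⟩
      rw [hπ, mul_inv_cancel₀ ha.ne', one_mul, sub_self]

theorem exists_eq_sum_smul_of_isMaxOn {ι : Type*} [Fintype ι] (f : ι → Module.Dual ℝ E)
    (d : ι → ℝ) (g : Module.Dual ℝ E) {u : E} (hu : ∀ j, f j u ≤ d j)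
    (hmax : IsMaxOn g {x | ∀ j, f j x ≤ d j} u) :
    ∃ μ : ι → ℝ, (∀ j, 0 ≤ μ j) ∧ (∀ j, f j u < d j → μ j = 0) ∧ g = ∑ j, μ j • f j := by
  classical
  obtain ⟨t, ht, hg⟩ | ⟨v, hv, hgv⟩ := Module.Dual.farkas {j | d j ≤ f j u} f g
  · refine ⟨fun j => if d j ≤ f j u then t j else 0, fun j => ?_, fun j hj => ?_, ?_⟩
    · dsimp only
      split_ifs with h
      · exact ht j (by simpa using h)
      · exact le_rfl
    · simp [not_le.mpr hj]
    · rw [hg, Finset.sum_filter]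
      simp only [ite_smul, zero_smul]
  · exfalso
    -- `u + ε • v` stays feasible for small `ε > 0` and improves `g`
    have hsmall : ∀ᶠ ε in 𝓝[>] (0 : ℝ), ∀ j, f j u < d j → f j u + ε * f j v < d j := by
      refine Filter.eventually_all.mpr fun j => ?_
      by_cases hj : f j u < d j
      · have hc : Continuous fun ε : ℝ => f j u + ε * f j v := by fun_prop
        have : Tendsto (fun ε : ℝ => f j u + ε * f j v) (𝓝[>] 0) (𝓝 (f j u)) :=
          tendsto_nhdsWithin_of_tendsto_nhds (hc.tendsto' 0 _ (by simp))
        exact (this.eventually_lt_const hj).mono fun ε hε _ => hε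
      · exact Filter.Eventually.of_forall fun ε h => absurd h hj
    obtain ⟨ε, hε, hε0⟩ := (hsmall.and self_mem_nhdsWithin).exists
    have hfeas : ∀ j, f j (u + ε • v) ≤ d j := by
      intro j
      simp only [map_add, map_smul, smul_eq_mul]
      by_cases hj : f j u < d j
      · exact (hε j hj).le
      · have := mul_nonpos_of_nonneg_of_nonpos (le_of_lt hε0) (hv j (by simpa using hj))
        linarith [hu j]
    have := isMaxOn_iff.mp hmax _ hfeas
    simp only [map_add, map_smul, smul_eq_mul] at this
    linarith [mul_pos (show (0 : ℝ) < ε from hε0) hgv]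

end Farkas

section Polyhedral

variable {E : Type*} [AddCommGroup E] [Module ℝ E]

def IsPolyhedral (P : Set E) : Prop :=
  ∃ s : Finset (Module.Dual ℝ E × ℝ), P = {x | ∀ h ∈ s, h.1 x ≤ h.2}

theorem isPolyhedral_setOf_le (f : Module.Dual ℝ E) (d : ℝ) : IsPolyhedral {x | f x ≤ d} :=
  ⟨{(f, d)}, by simp⟩

theorem IsPolyhedral.inter {P Q : Set E} (hP : IsPolyhedral P) (hQ : IsPolyhedral Q) :
    IsPolyhedral (P ∩ Q) := by
  classical
  obtain ⟨s, rfl⟩ := hP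
  obtain ⟨t, rfl⟩ := hQ
  exact ⟨s ∪ t, by ext; simp [or_imp, forall_and]⟩

theorem isPolyhedral_setOf_eq (f : Module.Dual ℝ E) (d : ℝ) : IsPolyhedral {x | f x = d} := by
  have : {x | f x = d} = {x | f x ≤ d} ∩ {x | (-f) x ≤ -d} := by
    ext x
    simp [le_antisymm_iff]
  rw [this]
  exact (isPolyhedral_setOf_le f d).inter (isPolyhedral_setOf_le (-f) (-d))

theorem IsPolyhedral.iInter {K : Type*} [Fintype K] {P : K → Set E}
    (hP : ∀ k, IsPolyhedral (P k)) : IsPolyhedral (⋂ k, P k) := by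
  classical
  choose s hs using hP
  refine ⟨Finset.univ.biUnion s, ?_⟩
  ext
  simp only [hs, Set.mem_iInter, Set.mem_ofPred_eq, Finset.mem_biUnion, Finset.mem_univ,
    true_and, forall_exists_index]
  exact forall_comm

theorem IsPolyhedral.preimage {F : Type*} [AddCommGroup F] [Module ℝ F] {P : Set F}
    (hP : IsPolyhedral P) (A : E →ₗ[ℝ] F) : IsPolyhedral (A ⁻¹' P) := by
  classical
  obtain ⟨s, rfl⟩ := hP
  refine ⟨s.image fun h => (h.1 ∘ₗ A, h.2), ?_⟩
  ext
  simp only [Set.mem_preimage, Set.mem_ofPred_eq, Finset.forall_mem_image, LinearMap.comp_apply]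

theorem IsPolyhedral.pi {K : Type*} [Fintype K] {P : K → Set E}
    (hP : ∀ k, IsPolyhedral (P k)) : IsPolyhedral (Set.univ.pi P) := by
  rw [Set.univ_pi_eq_iInter]
  exact .iInter fun k => (hP k).preimage (LinearMap.proj k : (K → E) →ₗ[ℝ] E)

theorem IsPolyhedral.exists_isMaxOn_add_dotProduct {P : Set E} (hP : IsPolyhedral P)
    {κ : Type*} [Fintype κ] (g : Module.Dual ℝ E) (L : E →ₗ[ℝ] κ → ℝ) {u : E} (hu : u ∈ P)
    (hmax : IsMaxOn g {x ∈ P | L x = L u} u) :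
    ∃ y : κ → ℝ, IsMaxOn (fun x => g x + y ⬝ᵥ L x) P u := by
  obtain ⟨s, rfl⟩ := hP
  -- `L x = L u` as the pair of inequalities `L x ≤ L u` and `-L x ≤ -L u`
  let F : s ⊕ κ ⊕ κ → Module.Dual ℝ E := Sum.elim (fun h => h.1.1)
    (Sum.elim (fun i => LinearMap.proj i ∘ₗ L) (fun i => -(LinearMap.proj i ∘ₗ L)))
  let D : s ⊕ κ ⊕ κ → ℝ := Sum.elim (fun h => h.1.2) (Sum.elim (L u) (-L u))
  have hsub : {x | ∀ j, F j x ≤ D j} ⊆ {x | (∀ h ∈ s, h.1 x ≤ h.2) ∧ L x = L u} := fun x hx =>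
    ⟨fun h hh => hx (.inl ⟨h, hh⟩), funext fun i =>
      le_antisymm (hx (.inr (.inl i))) (neg_le_neg_iff.mp (hx (.inr (.inr i))))⟩
  have hFu : ∀ j, F j u ≤ D j :=
    Sum.forall.mpr ⟨fun h => hu h h.2, Sum.forall.mpr ⟨fun _ => le_rfl, fun _ => le_rfl⟩⟩
  obtain ⟨μ, hμ, hslack, hg⟩ := exists_eq_sum_smul_of_isMaxOn F D g hFu (hmax.on_subset hsub)
  let y : κ → ℝ := fun i => μ (.inr (.inr i)) - μ (.inr (.inl i))
  have key : ∀ x, g x + y ⬝ᵥ L x = ∑ h : s, μ (.inl h) * h.1.1 x := by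
    intro x
    simp only [hg, F, y, Fintype.sum_sum_type, Finset.univ_eq_attach, Sum.elim_inl, Sum.elim_inr,
      smul_neg, Finset.sum_neg_distrib, LinearMap.add_apply, LinearMap.coe_sum, LinearMap.coe_smul,
      Finset.sum_apply, Pi.smul_apply, smul_eq_mul, LinearMap.coe_comp, LinearMap.coe_proj,
      Function.comp_apply, Function.eval, LinearMap.neg_apply, dotProduct, sub_mul,
      Finset.sum_sub_distrib]
    ring
  refine ⟨y, isMaxOn_iff.mpr fun x hx => ?_⟩
  rw [key, key]
  refine Finset.sum_le_sum fun h _ => ?_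
  by_cases hh : h.1.1 u < h.1.2
  · simp [hslack (.inl h) hh]
  · exact mul_le_mul_of_nonneg_left ((hx h h.2).trans (not_lt.mp hh)) (hμ _)

end Polyhedral

theorem isPolyhedral_setOf_mem_Icc_sum_eq {ι : Type*} [Fintype ι] (r : ℝ) (J : Set ι) :
    IsPolyhedral
      {u : ι → ℝ | (∀ i, u i ∈ Set.Icc (0 : ℝ) 1) ∧ ∑ i, u i = r ∧ ∀ i ∈ J, u i = 0} := by
  classical
  -- the upper bound `0` on `J` encodes the vanishing condition
  have : {u : ι → ℝ | (∀ i, u i ∈ Set.Icc (0 : ℝ) 1) ∧ ∑ i, u i = r ∧ ∀ i ∈ J, u i = 0} =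
      (⋂ i, {u | (-(LinearMap.proj i : (ι → ℝ) →ₗ[ℝ] ℝ)) u ≤ 0} ∩
        {u | (LinearMap.proj i : (ι → ℝ) →ₗ[ℝ] ℝ) u ≤ if i ∈ J then (0 : ℝ) else 1}) ∩
      {u | (∑ i, (LinearMap.proj i : (ι → ℝ) →ₗ[ℝ] ℝ)) u = r} := by
    ext u
    simp only [Set.mem_ofPred_eq, Set.mem_inter_iff, Set.mem_iInter, Set.mem_Icc,
      LinearMap.neg_apply, LinearMap.coe_proj, Function.eval, LinearMap.sum_apply, neg_nonpos]
    constructor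
    · rintro ⟨hbox, hsum, hJ⟩
      refine ⟨fun i => ⟨(hbox i).1, ?_⟩, hsum⟩
      split_ifs with hi
      · exact (hJ i hi).le
      · exact (hbox i).2
    · rintro ⟨hbounds, hsum⟩
      refine ⟨fun i => ⟨(hbounds i).1, (hbounds i).2.trans (by split_ifs <;> norm_num)⟩, hsum,
        fun i hi => le_antisymm (by simpa [hi] using (hbounds i).2) (hbounds i).1⟩
  rw [this]
  refine .inter (.iInter fun i => .inter ?_ ?_) (isPolyhedral_setOf_eq _ _) <;>
    exact isPolyhedral_setOf_le _ _

theorem IsMaxOn.of_sum_pi {K : Type*} [Fintype K] {X : K → Type*} {β : Type*}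
    [AddCommMonoid β] [PartialOrder β] [IsOrderedCancelAddMonoid β] {F : ∀ k, X k → β}
    {S : ∀ k, Set (X k)} {u : ∀ k, X k} (hu : u ∈ Set.univ.pi S)
    (h : IsMaxOn (fun x => ∑ k, F k (x k)) (Set.univ.pi S) u) (k : K) :
    IsMaxOn (F k) (S k) (u k) := by
  classical
  refine isMaxOn_iff.mpr fun v hv => ?_
  have hmem : Function.update u k v ∈ Set.univ.pi S := fun k' _ => by
    rcases eq_or_ne k' k with rfl | hk'
    · simpa using hv
    · simpa [hk'] using hu k' (Set.mem_univ _)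
  have := isMaxOn_iff.mp h _ hmem
  rw [← Finset.add_sum_erase _ _ (Finset.mem_univ k),
    ← Finset.add_sum_erase _ _ (Finset.mem_univ k),
    Finset.sum_congr rfl fun k' hk' => by rw [Function.update_of_ne (Finset.ne_of_mem_erase hk')],
    Function.update_self] at this
  exact le_of_add_le_add_right this

section Decomposition

variable {K ι : Type*} [Fintype K] [Fintype ι] {P : K → Set (ι → ℝ)} {c u : K → ι → ℝ}

theorem isMaxOn_sum_of_isMaxOn_add_dotProduct {y : ι → ℝ}
    (h : ∀ k, IsMaxOn (fun v => (c k + y) ⬝ᵥ v) (P k) (u k)) :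
    IsMaxOn (fun v => ∑ k, c k ⬝ᵥ v k) {v | (∀ k, v k ∈ P k) ∧ ∑ k, v k = ∑ k, u k} u := by
  refine isMaxOn_iff.mpr fun v hv => ?_
  obtain ⟨hv, hsum⟩ := hv
  have := Finset.sum_le_sum fun k (_ : k ∈ Finset.univ) => isMaxOn_iff.mp (h k) (v k) (hv k)
  simp only [add_dotProduct, Finset.sum_add_distrib, ← dotProduct_sum, hsum] at this
  exact le_of_add_le_add_right this

theorem exists_price_of_isMaxOn_sum (hP : ∀ k, IsPolyhedral (P k)) (hu : ∀ k, u k ∈ P k)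
    (hmax : IsMaxOn (fun v => ∑ k, c k ⬝ᵥ v k) {v | (∀ k, v k ∈ P k) ∧ ∑ k, v k = ∑ k, u k} u) :
    ∃ y : ι → ℝ, ∀ k, IsMaxOn (fun v => (c k + y) ⬝ᵥ v) (P k) (u k) := by
  let g : Module.Dual ℝ (K → ι → ℝ) := ∑ k, dotProductBilin ℝ ℝ (c k) ∘ₗ LinearMap.proj k
  let L : (K → ι → ℝ) →ₗ[ℝ] ι → ℝ := ∑ k, LinearMap.proj k
  have hg : ∀ x, g x = ∑ k, c k ⬝ᵥ x k := by simp [g]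
  have hL : ∀ x, L x = ∑ k, x k := by simp [L]
  have hu' : u ∈ Set.univ.pi P := fun k _ => hu k
  obtain ⟨y, hy⟩ := (IsPolyhedral.pi hP).exists_isMaxOn_add_dotProduct g L hu' <|
    isMaxOn_iff.mpr fun x hx => by
      simpa only [hg] using isMaxOn_iff.mp hmax x ⟨fun k => hx.1 k (Set.mem_univ k), by
        simpa only [hL] using hx.2⟩
  have hLagrangian : (fun x => g x + y ⬝ᵥ L x) = fun x => ∑ k, (c k + y) ⬝ᵥ x k := by
    ext x
    simp only [hg, hL, add_dotProduct, dotProduct_sum, Finset.sum_add_distrib]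
  rw [hLagrangian] at hy
  exact ⟨y, hy.of_sum_pi hu'⟩

theorem exists_price_iff_isMaxOn_sum (hP : ∀ k, IsPolyhedral (P k)) (hu : ∀ k, u k ∈ P k) :
    (∃ y : ι → ℝ, ∀ k, IsMaxOn (fun v => (c k + y) ⬝ᵥ v) (P k) (u k)) ↔
      IsMaxOn (fun v => ∑ k, c k ⬝ᵥ v k) {v | (∀ k, v k ∈ P k) ∧ ∑ k, v k = ∑ k, u k} u :=
  ⟨fun ⟨_, hy⟩ => isMaxOn_sum_of_isMaxOn_add_dotProduct hy, exists_price_of_isMaxOn_sum hP hu⟩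

end Decomposition

theorem stmt_9_general (n K : ℕ) (R : Fin K → ℕ)
    (J : Fin K → Set (Fin n)) (ρ : Fin K → Fin n → ℝ)
    (Δ : Fin K → Set (Fin n → ℝ))
    (hΔ : ∀ k, Δ k = {u : Fin n → ℝ |
      (∀ i, u i ∈ Set.Icc (0 : ℝ) 1) ∧ (∑ i, u i) = (R k : ℝ) ∧ ∀ i ∈ J k, u i = 0})
    (ustar : Fin K → Fin n → ℝ) (hu : ∀ k, ustar k ∈ Δ k) :
    (∃ y : Fin n → ℝ, ∀ k, ∀ v ∈ Δ k,
        ∑ i, (ρ k i + y i) * v i ≤ ∑ i, (ρ k i + y i) * ustar k i)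
    ↔ (∀ v : Fin K → Fin n → ℝ, (∀ k, v k ∈ Δ k) → (∑ k, v k) = (∑ k, ustar k) →
        ∑ k, ∑ i, ρ k i * v k i ≤ ∑ k, ∑ i, ρ k i * ustar k i) := by
  have hpoly : ∀ k, IsPolyhedral (Δ k) := fun k => hΔ k ▸ isPolyhedral_setOf_mem_Icc_sum_eq _ _
  simpa only [isMaxOn_iff, dotProduct, Pi.add_apply, Set.mem_ofPred_eq, and_imp] using
    exists_price_iff_isMaxOn_sum (c := ρ) hpoly hu

/-- For `uₖ* ∈ Δₖ` with `N = ∑ₖ uₖ*`: there exists a price vector `y` making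
each `uₖ*` optimal over `Δₖ` if and only if the `uₖ*` realize the minimum in
the infimal convolution at `N`, i.e. `∑ₖ ⟨ρₖ,uₖ*⟩` is maximal among all
decompositions of `N` into elements `vₖ ∈ Δₖ`. -/
theorem stmt_9 (n K : ℕ) (R : Fin K → ℕ) (hR : ∀ k, R k ≤ n)
    (J : Fin K → Set (Fin n)) (ρ : Fin K → Fin n → ℝ)
    (Δ : Fin K → Set (Fin n → ℝ))
    (hΔ : ∀ k, Δ k = {u : Fin n → ℝ |
      (∀ i, u i ∈ Set.Icc (0 : ℝ) 1) ∧ (∑ i, u i) = (R k : ℝ) ∧ ∀ i ∈ J k, u i = 0})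
    (ustar : Fin K → Fin n → ℝ) (hu : ∀ k, ustar k ∈ Δ k) :
    (∃ y : Fin n → ℝ, ∀ k, ∀ v ∈ Δ k,
        ∑ i, (ρ k i + y i) * v i ≤ ∑ i, (ρ k i + y i) * ustar k i)
    ↔ (∀ v : Fin K → Fin n → ℝ, (∀ k, v k ∈ Δ k) → (∑ k, v k) = (∑ k, ustar k) →
        ∑ k, ∑ i, ρ k i * v k i ≤ ∑ k, ∑ i, ρ k i * ustar k i) :=
  stmt_9_general n K R J ρ Δ hΔ ustar hu
end

section
/- Let N ∈ ℤ^n and let u_k* ∈ F_k (k = 1,…,K) satisfy N = ∑_{k=1}^K u_k* and ∑_{k=1}^K ⟨ρ_k, u_k*⟩ ≥ ∑_{k=1}^K ⟨ρ_k, v_k⟩ for all v_k ∈ F_k with ∑_{k=1}^K v_k = N (an optimal decomposition of N). Then the set of vectors y ∈ ℝ^n such that for every k, u_k* maximizes v ↦ ⟨ρ_k + y, v⟩ over F_k, is nonempty, and it equals the polyhedron of all y ∈ ℝ^n satisfying: for every k ∈ {1,…,K} and every pair of indices i, j ∉ J_k with u_k*(i) = 1 and u_k*(j) = 0, one has ρ_k(i)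 + y_i ≥ ρ_k(j) + y_j. -/
/-!
Take the items as vertices of a graph with, for every customer `k`, an arrow `i ⟶ j` of length
`ρₖ(i) - ρₖ(j)` whenever `k` holds `i`, lacks `j`, and may own both. Since `Fₖ` consists of the
`Rₖ`-subsets of the items outside `Jₖ`, `uₖ*` maximizes `⟨ρₖ + y, ·⟩` over `Fₖ` iff no single
swap improves it; hence the price vectors in question are exactly the potentials `y` of
the graph (`yⱼ ≤ yᵢ + ρₖ(i) - ρₖ(j)` along every arrow), which gives the equality. Trading along
a simple cycle of the graph produces another decomposition of `N` of value
`∑ₖ ⟨ρₖ, uₖ*⟩ - (length of the cycle)`, so optimality makes every simple cycle nonnegative, and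
then the least length of a simple path ending at `j` is a potential.
-/

open Finset Matrix

theorem Finset.sum_le_sum_of_card_eq {α M : Type*} [DecidableEq α] [AddCommMonoid M] [LinearOrder M]
    [IsOrderedAddMonoid M] {s t : Finset α} {f : α → M}
    (hst : #s = #t) (h : ∀ i ∈ s \ t, ∀ j ∈ t \ s, f i ≤ f j) :
    ∑ i ∈ s, f i ≤ ∑ j ∈ t, f j := by
  rw [← sum_inter_add_sum_sdiff s t, ← sum_inter_add_sum_sdiff t s, inter_comm t s]
  gcongr ?_ + ?_
  · exact le_rfl
  obtain hs | hs := (s \ t).eq_empty_or_nonempty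
  · have : t \ s = ∅ := by rw [← card_eq_zero, ← card_sdiff_comm hst, hs, card_empty]
    simp [hs, this]
  calc ∑ i ∈ s \ t, f i ≤ #(s \ t) • (s \ t).sup' hs f :=
        sum_le_card_nsmul _ _ _ fun i hi => le_sup' f hi
    _ = #(t \ s) • (s \ t).sup' hs f := by rw [card_sdiff_comm hst]
    _ ≤ ∑ j ∈ t \ s, f j := card_nsmul_le_sum _ _ _ fun j hj => sup'_le hs f fun i hi => h i hi j hj

namespace Quiver.Path

variable {V : Type*} [Quiver V]

theorem finite_setOf_length_le [Finite V] [∀ a b : V, Finite (a ⟶ b)] (a : V) (m : ℕ) :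
    ∀ b : V, {p : Path a b | p.length ≤ m}.Finite := by
  have h0 (b : V) : {p : Path a b | p.length ≤ 0}.Finite := by
    refine Set.Subsingleton.finite fun p hp q hq => ?_
    obtain rfl := eq_of_length_zero p (Nat.le_zero.1 hp)
    rw [eq_nil_of_length_zero p (Nat.le_zero.1 hp), eq_nil_of_length_zero q (Nat.le_zero.1 hq)]
  induction m with
  | zero => exact h0
  | succ m ih =>
    intro b
    refine ((h0 b).union (Set.finite_iUnion fun c =>
      Set.finite_iUnion fun e : c ⟶ b => (ih c).image (·.cons e))).subset ?_
    rintro (_ | ⟨q, e⟩) hp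
    · exact Or.inl (Nat.zero_le _)
    · exact Or.inr (Set.mem_iUnion₂.2 ⟨_, e, q, Nat.le_of_succ_le_succ hp, rfl⟩)

theorem nodup_vertices_of_nodup_comp {a b c : V} {p : Path a b} {q : Path b c}
    (h : (p.comp q).vertices.Nodup) : p.vertices.Nodup ∧ q.vertices.Nodup := by
  rw [vertices_comp] at h
  refine ⟨h.sublist ?_, h.of_append_right⟩
  have := (List.singleton_sublist.2 (start_mem_vertices q)).append_left p.vertices.dropLast
  rwa [dropLast_append_end_eq] at this

theorem nodup_tail_vertices_cons {a b : V} {p : Path a b} (hp : p.vertices.Nodup) (e : b ⟶ a) :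
    (p.cons e).vertices.tail.Nodup := by
  have hv : p.vertices = a :: p.vertices.tail := List.eq_cons_of_mem_head? (by simp)
  rw [hv, List.nodup_cons] at hp
  rw [vertices_cons, hv]
  exact hp.2.concat hp.1

theorem perm_dropLast_tail_vertices {a : V} (c : Path a a) :
    c.vertices.dropLast.Perm c.vertices.tail := by
  have hv : c.vertices = a :: c.vertices.tail := List.eq_cons_of_mem_head? (by simp)
  refine (List.perm_cons a).1 ?_
  calc List.Perm (a :: c.vertices.dropLast) (c.vertices.dropLast ++ [a]) :=
        (List.perm_append_singleton _ _).symm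
      _ = a :: c.vertices.tail := by rw [c.dropLast_append_end_eq, ← hv]

end Quiver.Path

namespace Quiver

variable {V : Type*} [Quiver V]

theorem exists_potential_of_addWeight_nonneg [Finite V] [∀ a b : V, Finite (a ⟶ b)]
    (w : ∀ {a b : V}, (a ⟶ b) → ℝ)
    (hw : ∀ (a : V) (c : Path a a), c.vertices.tail.Nodup → 0 ≤ c.addWeight w) :
    ∃ y : V → ℝ, ∀ {a b : V} (e : a ⟶ b), y b ≤ y a + w e := by
  have := Fintype.ofFinite V
  -- `y b` will be the least weight of a path with distinct vertices ending at `b`.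
  let S (b : V) : Set (Σ a, Path a b) := {x | x.2.vertices.Nodup}
  have hS (b : V) : (S b).Finite := by
    refine (Set.finite_iUnion fun a =>
      (Path.finite_setOf_length_le a (Fintype.card V) b).image (Sigma.mk a)).subset ?_
    rintro ⟨a, p⟩ hp
    have := hp.length_le_card
    simp only [Path.vertices_length] at this
    exact Set.mem_iUnion.2 ⟨a, p, by simp only [Set.mem_ofPred_eq]; omega, rfl⟩
  choose p hpS hpmin using fun b =>
    (S b).exists_min_image (fun x => x.2.addWeight w) (hS b) ⟨⟨b, .nil⟩, by simp [S]⟩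
  refine ⟨fun b => (p b).2.addWeight w, fun {a b} e => ?_⟩
  by_cases hb : b ∈ (p a).2.vertices
  · obtain ⟨q, r, hqr⟩ := Path.exists_eq_comp_of_mem_vertices _ hb
    have hnd := hpS a
    simp only [S, Set.mem_ofPred_eq, hqr] at hnd
    obtain ⟨hq, hr⟩ := Path.nodup_vertices_of_nodup_comp hnd
    have hcycle := hw b _ (Path.nodup_tail_vertices_cons hr e)
    have := hpmin b ⟨_, q⟩ hq
    simp only [hqr, Path.addWeight_comp, Path.addWeight_cons] at this hcycle ⊢
    linarith
  · have hnd : ((p a).2.cons e).vertices.Nodup := by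
      simpa using (hpS a).concat hb
    simpa using hpmin b ⟨_, (p a).2.cons e⟩ hnd

end Quiver

section Selection

variable {ι : Type*} [Fintype ι]

def IsSelection (R : ℕ) (J : Set ι) (u : ι → ℝ) : Prop :=
  (∀ i, u i = 0 ∨ u i = 1) ∧ ∑ i, u i = R ∧ ∀ i ∈ J, u i = 0

namespace IsSelection

variable {R : ℕ} {J : Set ι} {u : ι → ℝ}

theorem ite_eq_apply (hu : IsSelection R J u) (i : ι) : (if u i = 1 then 1 else 0) = u i := by
  rcases hu.1 i with h | h <;> simp [h]

theorem card_support (hu : IsSelection R J u) : #{i | u i = 1} = R := by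
  have h : ∑ i, (if u i = 1 then (1 : ℝ) else 0) = R := by simpa only [hu.ite_eq_apply] using hu.2.1
  rw [sum_boole] at h
  exact_mod_cast h

theorem dotProduct_eq_sum_support (hu : IsSelection R J u) (w : ι → ℝ) :
    w ⬝ᵥ u = ∑ i with u i = 1, w i := by
  rw [sum_filter, dotProduct]
  refine sum_congr rfl fun i _ => ?_
  rcases hu.1 i with h | h <;> simp [h]

variable [DecidableEq ι]

theorem add_sum_single_sub_sum_single (hu : IsSelection R J u) {S T : Finset ι}
    (hS : ∀ i ∈ S, i ∉ J ∧ u i = 1) (hT : ∀ j ∈ T, j ∉ J ∧ u j = 0) (hST : #S = #T) :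
    IsSelection R J (u + ∑ j ∈ T, Pi.single j 1 - ∑ i ∈ S, Pi.single i 1) := by
  have hval (x : ι) : (u + ∑ j ∈ T, Pi.single j 1 - ∑ i ∈ S, Pi.single i 1 : ι → ℝ) x
      = u x + (if x ∈ T then 1 else 0) - (if x ∈ S then 1 else 0) := by
    simp [Finset.sum_apply]
  refine ⟨fun x => ?_, ?_, fun x hx => ?_⟩
  · rw [hval]
    by_cases hxS : x ∈ S
    · have hxT : x ∉ T := fun h => by linarith [(hS x hxS).2, (hT x h).2]
      simp [hxS, hxT, (hS x hxS).2]
    · by_cases hxT : x ∈ T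
      · simp [hxS, hxT, (hT x hxT).2]
      · simpa [hxS, hxT] using hu.1 x
  · simp only [hval, sum_add_distrib, sum_sub_distrib, sum_boole]
    simp [hu.2.1, hST]
  · have hxS : x ∉ S := fun h => (hS x h).1 hx
    have hxT : x ∉ T := fun h => (hT x h).1 hx
    simp [hxS, hxT, hu.2.2 x hx]

theorem dotProduct_le_iff (hu : IsSelection R J u) (w : ι → ℝ) :
    (∀ v, IsSelection R J v → w ⬝ᵥ v ≤ w ⬝ᵥ u) ↔
      ∀ i j, i ∉ J → j ∉ J → u i = 1 → u j = 0 → w j ≤ w i := by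
  refine ⟨fun hmax i j hi hj hui huj => ?_, fun hswap v hv => ?_⟩
  · have hv := hu.add_sum_single_sub_sum_single (S := {i}) (T := {j}) (by simpa using ⟨hi, hui⟩)
      (by simpa using ⟨hj, huj⟩) rfl
    simpa [dotProduct_add, dotProduct_sub, dotProduct_single] using hmax _ hv
  · rw [hv.dotProduct_eq_sum_support, hu.dotProduct_eq_sum_support]
    refine sum_le_sum_of_card_eq (by rw [hv.card_support, hu.card_support]) fun j hj i hi => ?_
    simp only [mem_sdiff, mem_filter, mem_univ, true_and] at hj hi
    exact hswap i j (fun h => by simp [hu.2.2 i h] at hi) (fun h => by simp [hv.2.2 j h] at hj)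
      hi.1 ((hu.1 j).resolve_right hj.2)

end IsSelection
end Selection

section Trades

variable {ι κ : Type*}

/-- `(k, i, j)`: customer `k` may give up an item `i` it holds for an item `j` it lacks. -/
def IsTrade (J : κ → Set ι) (u : κ → ι → ℝ) (t : κ × ι × ι) : Prop :=
  t.2.1 ∉ J t.1 ∧ t.2.2 ∉ J t.1 ∧ u t.1 t.2.1 = 1 ∧ u t.1 t.2.2 = 0

def tradeLoss (ρ : κ → ι → ℝ) (t : κ × ι × ι) : ℝ := ρ t.1 t.2.1 - ρ t.1 t.2.2

def TradeGraph (_J : κ → Set ι) (_u : κ → ι → ℝ) : Type _ := ι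

namespace TradeGraph

variable {J : κ → Set ι} {u : κ → ι → ℝ}

instance : Quiver (TradeGraph J u) := ⟨fun i j => {k : κ // IsTrade J u (k, i, j)}⟩

instance [Finite ι] : Finite (TradeGraph J u) := inferInstanceAs (Finite ι)

instance [Finite κ] (a b : TradeGraph J u) : Finite (a ⟶ b) := Subtype.finite

def loss (ρ : κ → ι → ℝ) {a b : TradeGraph J u} (e : a ⟶ b) : ℝ := tradeLoss ρ (e.1, a, b)

def trades {a : TradeGraph J u} : ∀ {b : TradeGraph J u}, Quiver.Path a b → List (κ × ι × ι)
  | _, .nil => []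
  | c, @Quiver.Path.cons _ _ _ b _ p e => trades p ++ [((e.1, b, c) : κ × ι × ι)]

variable {a b : TradeGraph J u}

theorem map_trades_snd_snd (p : Quiver.Path a b) : (trades p).map (·.2.2) = p.vertices.tail := by
  induction p with
  | nil => rfl
  | cons p e ih =>
    rw [trades, List.map_append, ih, Quiver.Path.vertices_cons, List.concat_eq_append,
      List.tail_append_of_ne_nil p.vertices_ne_nil]
    rfl

theorem map_trades_snd_fst (p : Quiver.Path a b) :
    (trades p).map (·.2.1) = p.vertices.dropLast := by
  induction p with
  | nil => rfl
  | cons p e ih =>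
    rw [trades, List.map_append, ih, Quiver.Path.vertices_cons, List.concat_eq_append,
      List.dropLast_concat]
    exact p.dropLast_append_end_eq

theorem isTrade_of_mem_trades (p : Quiver.Path a b) {t : κ × ι × ι} (ht : t ∈ trades p) :
    IsTrade J u t := by
  induction p with
  | nil => simp [trades] at ht
  | cons p e ih =>
    rw [trades, List.mem_append, List.mem_singleton] at ht
    rcases ht with ht | rfl
    · exact ih ht
    · exact e.2

theorem addWeight_loss (ρ : κ → ι → ℝ) (p : Quiver.Path a b) :
    p.addWeight (loss ρ) = ((trades p).map (tradeLoss ρ)).sum := by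
  induction p with
  | nil => simp [trades]
  | cons p e ih => simp [trades, ih, loss]

end TradeGraph

variable [DecidableEq ι] [DecidableEq κ]

def reallocate (u : κ → ι → ℝ) (A : Finset (κ × ι × ι)) (k : κ) : ι → ℝ :=
  u k + ∑ t ∈ A with t.1 = k, (Pi.single t.2.2 1 - Pi.single t.2.1 1)

variable {J : κ → Set ι} {u : κ → ι → ℝ} {A : Finset (κ × ι × ι)}

theorem isSelection_reallocate [Fintype ι] {R : ℕ} {k : κ} (hu : IsSelection R (J k) (u k))
    (hA : ∀ t ∈ A, IsTrade J u t) (hsrc : Set.InjOn (fun t : κ × ι × ι => t.2.1) ↑A)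
    (htgt : Set.InjOn (fun t : κ × ι × ι => t.2.2) ↑A) :
    IsSelection R (J k) (reallocate u A k) := by
  set B := A.filter (·.1 = k)
  have hB : (B : Set (κ × ι × ι)) ⊆ A := coe_subset.2 (filter_subset _ _)
  have hv : reallocate u A k = u k + ∑ j ∈ B.image (·.2.2), Pi.single j 1
      - ∑ i ∈ B.image (·.2.1), Pi.single i 1 := by
    rw [reallocate, sum_sub_distrib, sum_image (htgt.mono hB), sum_image (hsrc.mono hB),
      add_sub_assoc]
  rw [hv]
  refine hu.add_sum_single_sub_sum_single ?_ ?_ ?_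
  · simp only [mem_image, mem_filter, B]
    rintro _ ⟨t, ⟨ht, rfl⟩, rfl⟩
    exact ⟨(hA t ht).1, (hA t ht).2.2.1⟩
  · simp only [mem_image, mem_filter, B]
    rintro _ ⟨t, ⟨ht, rfl⟩, rfl⟩
    exact ⟨(hA t ht).2.1, (hA t ht).2.2.2⟩
  · rw [card_image_of_injOn (hsrc.mono hB), card_image_of_injOn (htgt.mono hB)]

variable [Fintype κ]

theorem sum_reallocate : ∑ k, reallocate u A k
    = ∑ k, u k + ∑ t ∈ A, (Pi.single t.2.2 1 - Pi.single t.2.1 1) := by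
  simp only [reallocate, sum_add_distrib, sum_fiberwise]

theorem sum_dotProduct_reallocate [Fintype ι] (ρ : κ → ι → ℝ) :
    ∑ k, ρ k ⬝ᵥ reallocate u A k = ∑ k, ρ k ⬝ᵥ u k - ∑ t ∈ A, tradeLoss ρ t := by
  have hk (k : κ) : ρ k ⬝ᵥ reallocate u A k = ρ k ⬝ᵥ u k - ∑ t ∈ A with t.1 = k, tradeLoss ρ t := by
    simp only [reallocate, dotProduct_add, dotProduct_sum, dotProduct_sub, dotProduct_single,
      mul_one]
    rw [sub_eq_add_neg, ← sum_neg_distrib]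
    congr 1
    refine sum_congr rfl fun t ht => ?_
    rw [tradeLoss, (mem_filter.1 ht).2]
    ring
  rw [sum_congr rfl fun k _ => hk k, sum_sub_distrib, sum_fiberwise]

end Trades

namespace TradeGraph

variable {ι κ : Type*} [Fintype ι] [Fintype κ] [DecidableEq ι] [DecidableEq κ]
  {J : κ → Set ι} {u : κ → ι → ℝ}

theorem addWeight_loss_nonneg {R : κ → ℕ} (ρ : κ → ι → ℝ)
    (hu : ∀ k, IsSelection (R k) (J k) (u k))
    (hopt : ∀ v : κ → ι → ℝ, (∀ k, IsSelection (R k) (J k) (v k)) → ∑ k, v k = ∑ k, u k →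
      ∑ k, ρ k ⬝ᵥ v k ≤ ∑ k, ρ k ⬝ᵥ u k)
    {a : TradeGraph J u} (c : Quiver.Path a a) (hc : c.vertices.tail.Nodup) :
    0 ≤ c.addWeight (loss ρ) := by
  set L := trades c
  have htgt : (L.map (·.2.2)).Nodup := by rwa [map_trades_snd_snd]
  have hperm : (L.map (·.2.1)).Perm (L.map (·.2.2)) := by
    rw [map_trades_snd_fst, map_trades_snd_snd]
    exact c.perm_dropLast_tail_vertices
  have hsrc : (L.map (·.2.1)).Nodup := hperm.nodup_iff.2 htgt
  have hL : L.Nodup := htgt.of_map _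
  have hinj {f : κ × ι × ι → ι} (hf : (L.map f).Nodup) : Set.InjOn f L.toFinset :=
    fun x hx y hy => List.inj_on_of_nodup_map hf (List.mem_toFinset.1 hx) (List.mem_toFinset.1 hy)
  have hcirc : ∑ t ∈ L.toFinset, (Pi.single t.2.2 1 - Pi.single t.2.1 1 : ι → ℝ) = 0 := by
    rw [sum_sub_distrib, List.sum_toFinset _ hL, List.sum_toFinset _ hL, sub_eq_zero]
    simpa [List.map_map, Function.comp_def] using
      (hperm.map fun i => (Pi.single i 1 : ι → ℝ)).sum_eq.symm
  have hv := hopt (reallocate u L.toFinset)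
    (fun k => isSelection_reallocate (hu k)
      (fun t ht => isTrade_of_mem_trades c (List.mem_toFinset.1 ht))
      (hinj hsrc) (hinj htgt))
    (by rw [sum_reallocate, hcirc, add_zero])
  rw [sum_dotProduct_reallocate, List.sum_toFinset _ hL] at hv
  rw [addWeight_loss]
  linarith

end TradeGraph

theorem stmt_10_general (n K : ℕ) (R : Fin K → ℕ)
    (J : Fin K → Set (Fin n)) (ρ : Fin K → Fin n → ℝ)
    (F : Fin K → Set (Fin n → ℝ))
    (hF : ∀ k, F k = {u : Fin n → ℝ |
      (∀ i, u i = 0 ∨ u i = 1) ∧ (∑ i, u i) = (R k : ℝ) ∧ ∀ i ∈ J k, u i = 0})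
    (ustar : Fin K → Fin n → ℝ) (hu : ∀ k, ustar k ∈ F k)
    (N : Fin n → ℝ) (hN : N = ∑ k, ustar k)
    (hopt : ∀ v : Fin K → Fin n → ℝ, (∀ k, v k ∈ F k) → (∑ k, v k) = N →
      ∑ k, ∑ i, ρ k i * v k i ≤ ∑ k, ∑ i, ρ k i * ustar k i) :
    {y : Fin n → ℝ | ∀ k, ∀ v ∈ F k,
        ∑ i, (ρ k i + y i) * v i ≤ ∑ i, (ρ k i + y i) * ustar k i}.Nonempty
    ∧ {y : Fin n → ℝ | ∀ k, ∀ v ∈ F k,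
        ∑ i, (ρ k i + y i) * v i ≤ ∑ i, (ρ k i + y i) * ustar k i}
      = {y : Fin n → ℝ | ∀ k, ∀ i j : Fin n, i ∉ J k → j ∉ J k →
          ustar k i = 1 → ustar k j = 0 → ρ k j + y j ≤ ρ k i + y i} := by
  obtain rfl : F = fun k => {u | IsSelection (R k) (J k) u} := funext hF
  subst hN
  obtain ⟨y, hy⟩ := Quiver.exists_potential_of_addWeight_nonneg (V := TradeGraph J ustar)
    (TradeGraph.loss ρ) fun _ c hc => TradeGraph.addWeight_loss_nonneg ρ hu hopt c hc
  have hpoly (k : Fin K) (i j : Fin n) (hi : i ∉ J k) (hj : j ∉ J k) (hui : ustar k i = 1)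
      (huj : ustar k j = 0) : ρ k j + y j ≤ ρ k i + y i := by
    have := hy (a := i) (b := j) ⟨k, hi, hj, hui, huj⟩
    simp only [TradeGraph.loss, tradeLoss] at this
    linarith
  exact ⟨⟨y, fun k => (IsSelection.dotProduct_le_iff (hu k) _).2 (hpoly k)⟩,
    Set.ext fun y => forall_congr' fun k => IsSelection.dotProduct_le_iff (hu k) (ρ k + y)⟩

/-- Given an optimal decomposition `N = ∑ₖ uₖ*` (the `uₖ* ∈ Fₖ` maximize
`∑ₖ ⟨ρₖ,vₖ⟩` among decompositions of `N`), the set of price vectors `y` making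
every `uₖ*` optimal over `Fₖ` is nonempty and equals the polyhedron
`{y : ∀ k, ∀ i,j ∉ Jₖ with uₖ*(i)=1, uₖ*(j)=0, ρₖ(i)+yᵢ ≥ ρₖ(j)+yⱼ}`. -/
theorem stmt_10 (n K : ℕ) (R : Fin K → ℕ) (hR : ∀ k, R k ≤ n)
    (J : Fin K → Set (Fin n)) (ρ : Fin K → Fin n → ℝ)
    (F : Fin K → Set (Fin n → ℝ))
    (hF : ∀ k, F k = {u : Fin n → ℝ |
      (∀ i, u i = 0 ∨ u i = 1) ∧ (∑ i, u i) = (R k : ℝ) ∧ ∀ i ∈ J k, u i = 0})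
    (ustar : Fin K → Fin n → ℝ) (hu : ∀ k, ustar k ∈ F k)
    (N : Fin n → ℝ) (hN : N = ∑ k, ustar k)
    (hopt : ∀ v : Fin K → Fin n → ℝ, (∀ k, v k ∈ F k) → (∑ k, v k) = N →
      ∑ k, ∑ i, ρ k i * v k i ≤ ∑ k, ∑ i, ρ k i * ustar k i) :
    {y : Fin n → ℝ | ∀ k, ∀ v ∈ F k,
        ∑ i, (ρ k i + y i) * v i ≤ ∑ i, (ρ k i + y i) * ustar k i}.Nonempty
    ∧ {y : Fin n → ℝ | ∀ k, ∀ v ∈ F k,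
        ∑ i, (ρ k i + y i) * v i ≤ ∑ i, (ρ k i + y i) * ustar k i}
      = {y : Fin n → ℝ | ∀ k, ∀ i j : Fin n, i ∉ J k → j ∉ J k →
          ustar k i = 1 → ustar k j = 0 → ρ k j + y j ≤ ρ k i + y i} :=
  stmt_10_general n K R J ρ F hF ustar hu N hN hopt
end

section
/- Let u_k* ∈ F_k (k = 1,…,K) and N = ∑_{k=1}^K u_k*. Let i, j ∈ {1,…,n} and suppose there exists a path of finite weight from i to j in the exchange graph, i.e. a sequence of indices α_0 = i, α_1, …, α_p = j in {1,…,n} and a sequence k_0, …, k_{p−1} ∈ {1,…,K} such that for each u ∈ {0,…,p−1}, u_{k_u}*(α_u) = 1, u_{k_u}*(α_{u+1}) = 0 and α_{u+1} ∉ J_{k_u}. Then N − e_i + e_j belongs to the Minkowski sum F_1 + ⋯ + F_K. -/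
/-!
Induct on the length `p` of the path. If `α p` or `α (p - 1)` already occurs earlier on the path,
cutting out the loop gives a shorter path with the same ends. Otherwise let customer `c` carry out
the last edge, giving up `α (p - 1)` and taking `α p`: this keeps `c` feasible, changes the total
by `- e_{α (p - 1)} + e_{α p}`, and, since the two vertices do not occur earlier, leaves the rest
of the path an exchange path for the new decomposition, to which induction applies.
-/

open Finset

variable {ι κ : Type*}

def feasibleSet [Fintype ι] (r : ℕ) (S : Set ι) : Set (ι → ℝ) :=
  {u | (∀ i, u i = 0 ∨ u i = 1) ∧ ∑ i, u i = r ∧ ∀ i ∈ S, u i = 0}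

lemma sub_single_add_single_mem_feasibleSet [Fintype ι] [DecidableEq ι] {r : ℕ} {S : Set ι}
    {w : ι → ℝ} {a b : ι}
    (hw : w ∈ feasibleSet r S) (ha : w a = 1) (hb : w b = 0) (hbS : b ∉ S) :
    w - Pi.single a 1 + Pi.single b 1 ∈ feasibleSet r S := by
  obtain ⟨hbin, hsum, hS⟩ := hw
  have hab : a ≠ b := fun h => by simp [h, hb] at ha
  refine ⟨fun x => ?_, ?_, fun x hx => ?_⟩
  · rcases eq_or_ne x a with rfl | hxa
    · simp [hab, ha]
    rcases eq_or_ne x b with rfl | hxb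
    · simp [hxa, hb]
    simpa [hxa, hxb] using hbin x
  · simp [sum_add_distrib, sum_sub_distrib, hsum]
  · have hxa : x ≠ a := by rintro rfl; simp [hS x hx] at ha
    have hxb : x ≠ b := fun h => hbS (h ▸ hx)
    simp [hxa, hxb, hS x hx]

def exchange [DecidableEq ι] [DecidableEq κ] (u : κ → ι → ℝ) (c : κ) (a b : ι) :
    κ → ι → ℝ :=
  Function.update u c (u c - Pi.single a 1 + Pi.single b 1)

lemma exchange_mem [Fintype ι] [DecidableEq ι] [DecidableEq κ] {R : κ → ℕ} {J : κ → Set ι}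
    {u : κ → ι → ℝ} {c : κ} {a b : ι}
    (hu : ∀ d, u d ∈ feasibleSet (R d) (J d)) (ha : u c a = 1) (hb : u c b = 0)
    (hbJ : b ∉ J c) (d : κ) : exchange u c a b d ∈ feasibleSet (R d) (J d) := by
  rcases eq_or_ne d c with rfl | hdc
  · simpa [exchange] using sub_single_add_single_mem_feasibleSet (hu d) ha hb hbJ
  · simpa [exchange, hdc] using hu d

lemma sum_exchange [DecidableEq ι] [Fintype κ] [DecidableEq κ] (u : κ → ι → ℝ) (c : κ)
    (a b : ι) :
    ∑ d, exchange u c a b d = ∑ d, u d - Pi.single a 1 + Pi.single b 1 := by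
  rw [exchange, sum_update_of_mem (mem_univ c), ← add_sum_erase _ _ (mem_univ c),
    sdiff_singleton_eq_erase]
  abel

def ExchangeEdge (J : κ → Set ι) (u : κ → ι → ℝ) (x y : ι) : Prop :=
  ∃ c, u c x = 1 ∧ u c y = 0 ∧ y ∉ J c

def IsExchangePath (J : κ → Set ι) (u : κ → ι → ℝ) (α : ℕ → ι) (p : ℕ) : Prop :=
  ∀ t < p, ExchangeEdge J u (α t) (α (t + 1))

lemma ExchangeEdge.exchange [DecidableEq ι] [DecidableEq κ] {J : κ → Set ι} {u : κ → ι → ℝ}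
    {c : κ} {a b x y : ι}
    (h : ExchangeEdge J u x y) (ha : u c a = 1) (hxa : x ≠ a) (hxb : x ≠ b) (hyb : y ≠ b) :
    ExchangeEdge J (exchange u c a b) x y := by
  obtain ⟨d, hx, hy, hyJ⟩ := h
  refine ⟨d, ?_, ?_, hyJ⟩
  · rcases eq_or_ne d c with rfl | hdc
    · simp [_root_.exchange, hx, hxa, hxb]
    · simp [_root_.exchange, hdc, hx]
  · rcases eq_or_ne d c with rfl | hdc
    · rcases eq_or_ne y a with rfl | hya
      · simp [_root_.exchange, ha, hyb]
      · simp [_root_.exchange, hy, hya, hyb]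
    · simp [_root_.exchange, hdc, hy]

namespace IsExchangePath

variable {J : κ → Set ι} {u : κ → ι → ℝ} {α : ℕ → ι} {p : ℕ}

lemma mono {q : ℕ} (h : IsExchangePath J u α p) (hqp : q ≤ p) : IsExchangePath J u α q :=
  fun t ht => h t (ht.trans_le hqp)

/-- If `α s = α q`, the path can jump from `α s` directly to `α (q + 1)`. -/
lemma shortcut {q s : ℕ} (h : IsExchangePath J u α (q + 1)) (hs : s < q) (hαs : α s = α q) :
    IsExchangePath J u (Function.update α (s + 1) (α (q + 1))) (s + 1) := by
  intro t ht
  rcases Nat.lt_succ_iff_lt_or_eq.mp ht with hts | rfl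
  · simpa [Function.update_of_ne (Nat.ne_of_lt (Nat.lt_succ_of_lt hts)),
      Function.update_of_ne (Nat.succ_ne_succ_iff.mpr (Nat.ne_of_lt hts))] using h t (by omega)
  · simpa [Function.update_of_ne (Nat.succ_ne_self t).symm, hαs] using h q q.lt_succ_self

lemma exchange [DecidableEq ι] [DecidableEq κ] {b : ι} {c : κ} (h : IsExchangePath J u α p)
    (ha : u c (α p) = 1)
    (hα_ne_a : ∀ t < p, α t ≠ α p) (hα_ne_b : ∀ t ≤ p, α t ≠ b) :
    IsExchangePath J (exchange u c (α p) b) α p := fun t ht =>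
  (h t ht).exchange ha (hα_ne_a t ht) (hα_ne_b t ht.le) (hα_ne_b (t + 1) ht)

end IsExchangePath

theorem exists_feasible_sum_eq_of_isExchangePath [Fintype ι] [DecidableEq ι] [Fintype κ]
    [DecidableEq κ] {R : κ → ℕ} {J : κ → Set ι}
    {u : κ → ι → ℝ} {α : ℕ → ι} {p : ℕ} (hu : ∀ d, u d ∈ feasibleSet (R d) (J d))
    (hα : IsExchangePath J u α p) :
    ∃ v : κ → ι → ℝ, (∀ d, v d ∈ feasibleSet (R d) (J d)) ∧
      ∑ d, v d = ∑ d, u d - Pi.single (α 0) 1 + Pi.single (α p) 1 := by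
  induction p using Nat.strong_induction_on generalizing u α with
  | _ p ih =>
  rcases p with _ | q
  · exact ⟨u, hu, by simp⟩
  by_cases hlast : ∃ t < q + 1, α t = α (q + 1)
  · obtain ⟨t, ht, hαt⟩ := hlast
    rw [← hαt]
    exact ih t ht hu (hα.mono ht.le)
  by_cases hprev : ∃ s < q, α s = α q
  · obtain ⟨s, hs, hαs⟩ := hprev
    simpa using ih (s + 1) (by omega) hu (hα.shortcut hs hαs)
  push Not at hlast hprev
  obtain ⟨c, hca, hcb, hbJ⟩ := hα q q.lt_succ_self
  obtain ⟨v, hv, hsum⟩ := ih q q.lt_succ_self (exchange_mem hu hca hcb hbJ)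
    ((hα.mono q.le_succ).exchange hca hprev fun t ht => hlast t (Nat.lt_succ_of_le ht))
  refine ⟨v, hv, ?_⟩
  rw [hsum, sum_exchange]
  abel

theorem stmt_15_general (n K : ℕ) (R : Fin K → ℕ)
    (J : Fin K → Set (Fin n))
    (F : Fin K → Set (Fin n → ℝ))
    (hF : ∀ k, F k = {u : Fin n → ℝ |
      (∀ i, u i = 0 ∨ u i = 1) ∧ (∑ i, u i) = (R k : ℝ) ∧ ∀ i ∈ J k, u i = 0})
    (ustar : Fin K → Fin n → ℝ) (hu : ∀ k, ustar k ∈ F k)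
    (N : Fin n → ℝ) (hN : N = ∑ k, ustar k)
    (i j : Fin n) (p : ℕ)
    (α : ℕ → Fin n) (hα0 : α 0 = i) (hαp : α p = j)
    (k : ℕ → Fin K)
    (hpath : ∀ u < p, ustar (k u) (α u) = 1 ∧ ustar (k u) (α (u + 1)) = 0
      ∧ α (u + 1) ∉ J (k u)) :
    ∃ v : Fin K → Fin n → ℝ, (∀ k', v k' ∈ F k')
      ∧ (∑ k', v k') = N - Pi.single i 1 + Pi.single j 1 := by
  obtain rfl : F = fun k => feasibleSet (R k) (J k) := funext hF
  subst hN hα0 hαp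
  exact exists_feasible_sum_eq_of_isExchangePath hu fun t ht => ⟨k t, hpath t ht⟩

/-- If there is a finite-weight path from `i` to `j` in the exchange graph
associated to a decomposition `N = ∑ₖ uₖ*` with `uₖ* ∈ Fₖ`, then
`N - eᵢ + eⱼ` belongs to the Minkowski sum `F₁ + ⋯ + F_K`. -/
theorem stmt_15 (n K : ℕ) (R : Fin K → ℕ) (hR : ∀ k, R k ≤ n)
    (J : Fin K → Set (Fin n))
    (F : Fin K → Set (Fin n → ℝ))
    (hF : ∀ k, F k = {u : Fin n → ℝ |
      (∀ i, u i = 0 ∨ u i = 1) ∧ (∑ i, u i) = (R k : ℝ) ∧ ∀ i ∈ J k, u i = 0})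
    (ustar : Fin K → Fin n → ℝ) (hu : ∀ k, ustar k ∈ F k)
    (N : Fin n → ℝ) (hN : N = ∑ k, ustar k)
    (i j : Fin n) (p : ℕ) (hp : 1 ≤ p)
    (α : ℕ → Fin n) (hα0 : α 0 = i) (hαp : α p = j)
    (k : ℕ → Fin K)
    (hpath : ∀ u < p, ustar (k u) (α u) = 1 ∧ ustar (k u) (α (u + 1)) = 0
      ∧ α (u + 1) ∉ J (k u)) :
    ∃ v : Fin K → Fin n → ℝ, (∀ k', v k' ∈ F k')
      ∧ (∑ k', v k') = N - Pi.single i 1 + Pi.single j 1 :=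
  stmt_15_general n K R J F hF ustar hu N hN i j p α hα0 hαp k hpath
end

section
/- Let u_k* ∈ F_k (k = 1,…,K) be an optimal decomposition of N = ∑_{k=1}^K u_k* (i.e. ∑_k ⟨ρ_k, u_k*⟩ is maximal among all decompositions of N into elements of the F_k). Define weights on ordered pairs of {1,…,n} by w_{αβ} = min{ρ_k(α) − ρ_k(β) : k such that u_k*(α) = 1, u_k*(β) = 0 and β ∉ J_k} (w_{αβ} = +∞ if no such k). Fix s ∈ {1,…,n}. For M > 0, define modified weights w' by setting w'_{st} = M for every t ≠ s with w_{st} = +∞, and w' = w otherwise. Then there exists M₀ > 0 such that for all M ≥ M₀: (a) every cycle of the graph on {1,…,n} with weights w' has nonnegative total weight; and (b) the vector y* ∈ ℝ^n defined by y*_s = 0 and, for t ≠ s, y*_t = the minimum over all finite sequences s = β_0, β_1, …, β_q = t of the total weight ∑_{u=0}^{q−1} w'_{β_u β_{u+1}} (a finite minimum), satisfies: for every k ∈ {1,…,K}, u_k* maximizes v ↦ ⟨ρ_k + y*, v⟩ over F_k. -/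
/-!
Optimality of `u*` forces the exchange graph to have no negative cycle. It suffices to check
simple cycles, since a closed walk with a repeated vertex splits into two shorter closed walks.
Along a simple cycle the items a customer gives up are distinct and owned by it, and the items it
receives are distinct, not owned by it and not forbidden, so performing all the exchanges of the
cycle at once gives another decomposition of `N`, whose value is that of `u*` minus the weight of
the cycle.

A simple cycle of the modified graph visits `s` at most once, so it uses at most one new edge
`s → t` of weight `M`. If it uses none, it is a cycle of the exchange graph; otherwise its other
edges, fewer than `n`, weigh at least `-2B` where `|ρ| ≤ B`, so it is nonnegative once `M ≥ 2nB`.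
Without negative cycles every walk can be shortened to one with at most `n` steps and no larger
weight, so the shortest-walk distances `y` are attained minima, and
`y β ≤ y α + w' α β ≤ y α + w α β`. For an exchange `α → β` of customer `k` this reads
`ρ_k β + y β ≤ ρ_k α + y α`, and a threshold argument shows that a 0/1 vector with this exchange
property maximizes `⟨ρ_k + y, ·⟩` over the 0/1 vectors with the same number of ones.
-/

open Finset

theorem EReal.coe_finsetSum {α : Type*} (s : Finset α) (f : α → ℝ) :
    ((∑ a ∈ s, f a : ℝ) : EReal) = ∑ a ∈ s, (f a : EReal) :=
  map_sum (⟨⟨Real.toEReal, EReal.coe_zero⟩, EReal.coe_add⟩ : ℝ →+ EReal) f s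

namespace ExchangeGraph

section Walks

variable {V A : Type*} [AddCommMonoid A] (w : V → V → A)

def walkWeight (γ : ℕ → V) (q : ℕ) : A :=
  ∑ m ∈ range q, w (γ m) (γ (m + 1))

theorem walkWeight_congr {γ γ' : ℕ → V} {q : ℕ} (h : ∀ m ≤ q, γ m = γ' m) :
    walkWeight w γ q = walkWeight w γ' q :=
  sum_congr rfl fun m hm => by
    have := mem_range.1 hm
    rw [h m (by omega), h (m + 1) (by omega)]

theorem walkWeight_add (γ : ℕ → V) (a b : ℕ) :
    walkWeight w γ (a + b) = walkWeight w γ a + walkWeight w (fun m => γ (a + m)) b := by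
  simp only [walkWeight, sum_range_add, add_assoc]

def snoc (γ : ℕ → V) (q : ℕ) (t : V) : ℕ → V := fun m => if m ≤ q then γ m else t

theorem walkWeight_snoc (γ : ℕ → V) (q : ℕ) (t : V) :
    walkWeight w (snoc γ q t) (q + 1) = walkWeight w γ q + w (γ q) t := by
  rw [walkWeight, sum_range_succ, ← walkWeight,
    walkWeight_congr w (γ := snoc γ q t) (γ' := γ) fun m hm => if_pos hm]
  simp [snoc]

def excise (γ : ℕ → V) (i l : ℕ) : ℕ → V := fun m => if m ≤ i then γ m else γ (m + l)

theorem excise_add {γ : ℕ → V} {i l : ℕ} (h : γ i = γ (i + l)) (x : ℕ) :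
    excise γ i l (i + x) = γ (i + l + x) := by
  rcases Nat.eq_zero_or_pos x with rfl | hx
  · simpa [excise] using h
  · simp only [excise, if_neg (show ¬ i + x ≤ i by omega)]
    ring_nf

theorem walkWeight_excise {γ : ℕ → V} {i l : ℕ} (h : γ i = γ (i + l)) (m : ℕ) :
    walkWeight w γ (i + l + m) =
      walkWeight w (fun x => γ (i + x)) l + walkWeight w (excise γ i l) (i + m) := by
  rw [walkWeight_add, walkWeight_add, walkWeight_add w (excise γ i l),
    walkWeight_congr w (γ := excise γ i l) (γ' := γ) fun x hx => if_pos hx,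
    walkWeight_congr w (γ := fun x => excise γ i l (i + x)) fun x _ => excise_add h x]
  abel

/-- Walks of length `0` are allowed, so that the distance from `s` to itself is `0`. -/
def walkWeightsFrom (s t : V) : Set A :=
  {c | ∃ q γ, γ 0 = s ∧ γ q = t ∧ c = walkWeight w γ q}

theorem walkWeightsFrom_eq_of_ne {s t : V} (h : s ≠ t) :
    walkWeightsFrom w s t = {c | ∃ q γ, 1 ≤ q ∧ γ 0 = s ∧ γ q = t ∧ c = walkWeight w γ q} := by
  ext c
  constructor
  · rintro ⟨q, γ, h0, hq, rfl⟩
    refine ⟨q, γ, Nat.one_le_iff_ne_zero.2 fun hq0 => h ?_, h0, hq, rfl⟩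
    rw [← h0, ← hq, hq0]
  · rintro ⟨q, γ, -, h0, hq, rfl⟩
    exact ⟨q, γ, h0, hq, rfl⟩

theorem add_mem_walkWeightsFrom {s α : V} {c : A} (hc : c ∈ walkWeightsFrom w s α) (β : V) :
    c + w α β ∈ walkWeightsFrom w s β := by
  obtain ⟨q, γ, h0, hq, rfl⟩ := hc
  exact ⟨q + 1, snoc γ q β, by simpa [snoc] using h0, by simp [snoc], by
    rw [walkWeight_snoc, hq]⟩

theorem finite_range_walkWeight [Finite V] (q : ℕ) :
    (Set.range fun γ : ℕ → V => walkWeight w γ q).Finite := by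
  refine (Set.finite_range fun f : Fin (q + 1) → V =>
    walkWeight w (fun m => f ⟨min m q, by omega⟩) q).subset ?_
  rintro _ ⟨γ, rfl⟩
  exact ⟨fun j => γ j, walkWeight_congr w fun m hm => by simp [Nat.min_eq_left hm]⟩

theorem exists_repeat_of_not_injOn {γ : ℕ → V} {q : ℕ} (h : ¬ Set.InjOn γ (range q)) :
    ∃ i l m, 0 < l ∧ 0 < m ∧ q = i + l + m ∧ γ i = γ (i + l) := by
  simp only [Set.InjOn, coe_range, Set.mem_Iio, not_forall] at h
  obtain ⟨a, ha, b, hb, hab, hne⟩ := h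
  rcases Nat.lt_or_gt_of_ne hne with h | h
  · exact ⟨a, b - a, q - b, by omega, by omega, by omega, by rwa [Nat.add_sub_cancel' h.le]⟩
  · exact ⟨b, a - b, q - a, by omega, by omega, by omega, by rw [Nat.add_sub_cancel' h.le, hab]⟩

theorem injOn_succ_of_cycle {γ : ℕ → V} {r : ℕ} (hγ : γ r = γ 0)
    (hinj : Set.InjOn γ (range r)) : Set.InjOn (fun e => γ (e + 1)) (range r) := by
  have hwrap : ∀ e ∈ range r, (if e + 1 = r then 0 else e + 1) ∈ (range r : Set ℕ) ∧
      γ (e + 1) = γ (if e + 1 = r then 0 else e + 1) := fun e he => by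
    have := mem_range.1 he
    split_ifs with h
    · exact ⟨by simp; omega, by rw [h, hγ]⟩
    · exact ⟨by simp; omega, rfl⟩
  intro a ha b hb hab
  have hwrapped := hinj (hwrap a ha).1 (hwrap b hb).1
    ((hwrap a ha).2.symm.trans (hab.trans (hwrap b hb).2))
  have := mem_range.1 ha
  have := mem_range.1 hb
  split_ifs at hwrapped <;> omega

variable [LinearOrder A]

def NoNegCycle : Prop :=
  ∀ r (γ : ℕ → V), 1 ≤ r → γ r = γ 0 → 0 ≤ walkWeight w γ r

variable {w}

theorem NoNegCycle.isLeast_walkWeightsFrom_self (hw : NoNegCycle w) (s : V) :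
    IsLeast (walkWeightsFrom w s s) 0 := by
  refine ⟨⟨0, fun _ => s, rfl, rfl, by simp [walkWeight]⟩, ?_⟩
  rintro _ ⟨q, γ, h0, hq, rfl⟩
  rcases Nat.eq_zero_or_pos q with rfl | hq'
  · simp [walkWeight]
  · exact hw q γ hq' (hq.trans h0.symm)

variable [IsOrderedAddMonoid A]

theorem NoNegCycle.of_simple
    (h : ∀ r (γ : ℕ → V), 1 ≤ r → γ r = γ 0 → Set.InjOn γ (range r) → 0 ≤ walkWeight w γ r) :
    NoNegCycle w := by
  intro r
  induction r using Nat.strong_induction_on with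
  | _ r ih =>
  intro γ hr hγ
  by_cases hinj : Set.InjOn γ (range r)
  · exact h r γ hr hγ hinj
  obtain ⟨i, l, m, hl, hm, rfl, hrep⟩ := exists_repeat_of_not_injOn hinj
  rw [walkWeight_excise w hrep]
  refine add_nonneg (ih l (by omega) _ hl (by simpa using hrep.symm))
    (ih (i + m) (by omega) _ (by omega) ?_)
  rw [excise_add hrep, hγ]
  simp [excise]

theorem NoNegCycle.exists_walkWeight_le [Fintype V] (hw : NoNegCycle w) (q : ℕ) (γ : ℕ → V) :
    ∃ q' γ', q' ≤ Fintype.card V ∧ γ' 0 = γ 0 ∧ γ' q' = γ q ∧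
      walkWeight w γ' q' ≤ walkWeight w γ q := by
  induction q using Nat.strong_induction_on generalizing γ with
  | _ q ih =>
  by_cases hq : q ≤ Fintype.card V
  · exact ⟨q, γ, hq, rfl, rfl, le_rfl⟩
  have hinj : ¬ Set.InjOn γ (range q) := fun hinj => hq <| by
    simpa using card_le_card_of_injOn γ (fun _ _ => mem_coe.2 (mem_univ _)) hinj
  obtain ⟨i, l, m, hl, hm, rfl, hrep⟩ := exists_repeat_of_not_injOn hinj
  obtain ⟨q', γ', hq', h0, hend, hle⟩ := ih (i + m) (by omega) (excise γ i l)
  refine ⟨q', γ', hq', by simp [h0, excise], by rw [hend, excise_add hrep], ?_⟩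
  rw [walkWeight_excise w hrep]
  exact hle.trans (le_add_of_nonneg_left (hw l _ hl (by simpa using hrep.symm)))

theorem NoNegCycle.exists_isLeast [Fintype V] (hw : NoNegCycle w) {s t : V}
    (hne : (walkWeightsFrom w s t).Nonempty) : ∃ c, IsLeast (walkWeightsFrom w s t) c := by
  set T := {c | ∃ q γ, q ≤ Fintype.card V ∧ γ 0 = s ∧ γ q = t ∧ c = walkWeight w γ q}
  have hshort : ∀ c ∈ walkWeightsFrom w s t, ∃ c' ∈ T, c' ≤ c := by
    rintro _ ⟨q, γ, rfl, rfl, rfl⟩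
    obtain ⟨q', γ', hq', h0, hend, hle⟩ := hw.exists_walkWeight_le q γ
    exact ⟨_, ⟨q', γ', hq', h0, hend, rfl⟩, hle⟩
  have hfin : T.Finite := ((Set.finite_Iic (Fintype.card V)).biUnion
    fun q _ => finite_range_walkWeight w q).subset <| by
      rintro _ ⟨q, γ, hq, -, -, rfl⟩
      exact Set.mem_biUnion (x := q) hq ⟨γ, rfl⟩
  obtain ⟨c, hcT, hcmin⟩ := Set.exists_min_image T id hfin <| by
    obtain ⟨c, hc⟩ := hne
    obtain ⟨c', hc', -⟩ := hshort c hc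
    exact ⟨c', hc'⟩
  refine ⟨c, ?_, fun c' hc' => ?_⟩
  · obtain ⟨q, γ, -, h0, hq, rfl⟩ := hcT
    exact ⟨q, γ, h0, hq, rfl⟩
  · obtain ⟨c'', hc'', hle⟩ := hshort c' hc'
    exact (hcmin c'' hc'').trans hle

end Walks

section Potential

variable {V : Type*} {w : V → V → EReal}

theorem walkWeight_ne_bot (hbot : ∀ α β, w α β ≠ ⊥) (γ : ℕ → V) (q : ℕ) :
    walkWeight w γ q ≠ ⊥ :=
  WithBot.sum_eq_bot_iff.not.2 <| by simp only [not_exists, not_and]; exact fun _ _ => hbot _ _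

theorem walkWeight_eq_top (hbot : ∀ α β, w α β ≠ ⊥) {γ : ℕ → V} {q e : ℕ} (he : e ∈ range q)
    (htop : w (γ e) (γ (e + 1)) = ⊤) : walkWeight w γ q = ⊤ := by
  rw [walkWeight, ← add_sum_erase _ _ he, htop]
  exact EReal.top_add_of_ne_bot <| WithBot.sum_eq_bot_iff.not.2 <| by
    simp only [not_exists, not_and]; exact fun _ _ => hbot _ _

theorem NoNegCycle.exists_potential [Fintype V] (hw : NoNegCycle w) (hbot : ∀ α β, w α β ≠ ⊥)
    {s : V} (hreach : ∀ t ≠ s, w s t ≠ ⊤) :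
    ∃ y : V → ℝ, y s = 0 ∧ (∀ t, IsLeast (walkWeightsFrom w s t) (y t)) ∧
      ∀ α β, (y β : EReal) ≤ y α + w α β := by
  have hfinite : ∀ t, ∃ c ∈ walkWeightsFrom w s t, c ≠ ⊤ := fun t => by
    have hs := (hw.isLeast_walkWeightsFrom_self s).1
    by_cases ht : t = s
    · exact ⟨0, ht ▸ hs, EReal.zero_ne_top⟩
    · exact ⟨0 + w s t, add_mem_walkWeightsFrom w hs t, by simpa using hreach t ht⟩
  choose d hd using fun t => hw.exists_isLeast ((hfinite t).imp fun _ h => h.1)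
  have hreal : ∀ t, ((d t).toReal : EReal) = d t := fun t => by
    obtain ⟨c, hc, hctop⟩ := hfinite t
    obtain ⟨q, γ, -, -, hq⟩ := (hd t).1
    exact EReal.coe_toReal (ne_top_of_le_ne_top hctop ((hd t).2 hc))
      (hq ▸ walkWeight_ne_bot hbot γ q)
  refine ⟨fun t => (d t).toReal, ?_, fun t => (hreal t).symm ▸ hd t, fun α β => ?_⟩
  · simp [(hd s).unique (hw.isLeast_walkWeightsFrom_self s)]
  · simpa only [hreal] using (hd β).2 (add_mem_walkWeightsFrom w (hd α).1 β)

end Potential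

section SourceEdges

variable {V : Type*} [DecidableEq V] (w : V → V → EReal) (s : V) (M : ℝ)

noncomputable def addSourceEdges : V → V → EReal :=
  fun α β => if α = s ∧ β ≠ s ∧ w α β = ⊤ then (M : EReal) else w α β

variable {w s M}

theorem addSourceEdges_of_ne_source {α : V} (h : α ≠ s) (β : V) :
    addSourceEdges w s M α β = w α β :=
  if_neg fun hc => h hc.1

theorem addSourceEdges_le (α β : V) : addSourceEdges w s M α β ≤ w α β := by
  unfold addSourceEdges
  split_ifs with h
  · exact h.2.2 ▸ le_top
  · exact le_rfl

theorem addSourceEdges_source_ne_top {t : V} (h : t ≠ s) : addSourceEdges w s M s t ≠ ⊤ := by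
  unfold addSourceEdges
  split_ifs with hc
  · exact EReal.coe_ne_top M
  · tauto

theorem addSourceEdges_ne_bot (hbot : ∀ α β, w α β ≠ ⊥) (α β : V) :
    addSourceEdges w s M α β ≠ ⊥ := by
  unfold addSourceEdges
  split_ifs
  · exact EReal.coe_ne_bot M
  · exact hbot α β

theorem noNegCycle_addSourceEdges [Fintype V] (hw : NoNegCycle w) {C : ℝ} (hC : 0 ≤ C)
    (hlow : ∀ α β, ((-C : ℝ) : EReal) ≤ w α β) (hM : Fintype.card V * C ≤ M) :
    NoNegCycle (addSourceEdges w s M) := by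
  refine NoNegCycle.of_simple fun r γ hr hγ hinj => ?_
  by_cases hmod : ∀ e ∈ range r, addSourceEdges w s M (γ e) (γ (e + 1)) = w (γ e) (γ (e + 1))
  · rw [walkWeight, sum_congr rfl hmod]
    exact hw r γ hr hγ
  push Not at hmod
  obtain ⟨e₀, he₀, hne⟩ := hmod
  have hmodified : γ e₀ = s ∧ γ (e₀ + 1) ≠ s ∧ w (γ e₀) (γ (e₀ + 1)) = ⊤ := by
    by_contra hc
    exact hne (if_neg hc)
  have hedge : addSourceEdges w s M (γ e₀) (γ (e₀ + 1)) = M := if_pos hmodified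
  have hs := hmodified.1
  have hother : ∀ e ∈ (range r).erase e₀,
      ((-C : ℝ) : EReal) ≤ addSourceEdges w s M (γ e) (γ (e + 1)) := fun e he => by
    obtain ⟨hne', her⟩ := mem_erase.1 he
    rw [addSourceEdges_of_ne_source fun h => hne' (hinj her he₀ (h.trans hs.symm))]
    exact hlow _ _
  have hr : ((r - 1 : ℕ) : ℝ) ≤ Fintype.card V := by
    have := card_le_card_of_injOn γ (fun _ _ => mem_coe.2 (mem_univ _)) hinj
    simp only [card_range, card_univ] at this
    exact_mod_cast (by omega : r - 1 ≤ Fintype.card V)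
  calc (0 : EReal) ≤ ((M + ((range r).erase e₀).card • (-C) : ℝ) : EReal) := by
        rw [card_erase_of_mem he₀, card_range, nsmul_eq_mul, EReal.coe_nonneg]
        nlinarith [mul_le_mul_of_nonneg_right hr hC]
    _ = M + ∑ e ∈ (range r).erase e₀, ((-C : ℝ) : EReal) := by
        rw [sum_const, EReal.coe_add, EReal.coe_nsmul]
    _ ≤ walkWeight (addSourceEdges w s M) γ r := by
        rw [walkWeight, ← add_sum_erase _ _ he₀, hedge]
        exact add_le_add_right (sum_le_sum hother) _

end SourceEdges

section Allocation

variable {κ ι : Type*} [Fintype ι]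

def bundles (R : ℕ) (J : Set ι) : Set (ι → ℝ) :=
  {x | (∀ i, x i = 0 ∨ x i = 1) ∧ ∑ i, x i = R ∧ ∀ i ∈ J, x i = 0}

theorem dotProduct_le_of_exchange {p u v : ι → ℝ} (hu : ∀ i, u i = 0 ∨ u i = 1)
    (hv : ∀ i, v i = 0 ∨ v i = 1) (hsum : ∑ i, v i = ∑ i, u i)
    (hexch : ∀ α β, u α = 1 → u β = 0 → v β = 1 → p β ≤ p α) :
    p ⬝ᵥ v ≤ p ⬝ᵥ u := by
  classical
  obtain ⟨θ, hθ⟩ : ∃ θ, ∀ i, (u i = 1 → θ ≤ p i) ∧ (u i = 0 → v i = 1 → p i ≤ θ) := by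
    by_cases hA : (univ.filter fun i => u i = 1).Nonempty
    · refine ⟨(univ.filter fun i => u i = 1).inf' hA p, fun i => ⟨fun hi => ?_, fun hi hvi => ?_⟩⟩
      · exact inf'_le _ (by simpa using hi)
      · exact le_inf' _ _ fun α hα => hexch α i (by simpa using hα) hi hvi
    · obtain ⟨θ, hθ⟩ := (Set.finite_range p).bddAbove
      refine ⟨θ, fun i => ⟨fun hi => absurd ⟨i, by simpa using hi⟩ hA,
        fun _ _ => hθ ⟨i, rfl⟩⟩⟩
  have hdiff : p ⬝ᵥ v - p ⬝ᵥ u = ∑ i, (p i - θ) * (v i - u i) := by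
    simp only [dotProduct, sub_mul, mul_sub, sum_sub_distrib, ← mul_sum, hsum]
    ring
  have hterm : ∀ i, (p i - θ) * (v i - u i) ≤ 0 := fun i => by
    rcases hu i with h | h <;> rcases hv i with h' | h'
    · simp [h, h']
    · simpa [h, h'] using (hθ i).2 h h'
    · simpa [h, h'] using (hθ i).1 h
    · simp [h, h']
  linarith [sum_nonpos fun i (_ : i ∈ univ) => hterm i]

variable [DecidableEq ι]

theorem add_sum_single_sub_sum_single_mem_bundles {R : ℕ} {J : Set ι} {x : ι → ℝ}
    (hx : x ∈ bundles R J) {H T : Finset ι} (hH : ∀ i ∈ H, x i = 0 ∧ i ∉ J)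
    (hT : ∀ i ∈ T, x i = 1) (hcard : #H = #T) :
    x + ∑ i ∈ H, Pi.single i 1 - ∑ i ∈ T, Pi.single i 1 ∈ bundles R J := by
  obtain ⟨h01, hsum, hJ⟩ := hx
  have happly : ∀ i, (x + ∑ j ∈ H, Pi.single j 1 - ∑ j ∈ T, Pi.single j 1 : ι → ℝ) i =
      x i + (if i ∈ H then 1 else 0) - (if i ∈ T then 1 else 0) := fun i => by
    simp [Finset.sum_apply, sum_pi_single]
  have hdisj : ∀ i ∈ H, i ∉ T := fun i hiH hiT => by
    simpa [(hH i hiH).1] using hT i hiT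
  refine ⟨fun i => ?_, ?_, fun i hi => ?_⟩
  · rw [happly]
    by_cases hiH : i ∈ H
    · simp [hiH, hdisj i hiH, (hH i hiH).1]
    by_cases hiT : i ∈ T
    · simp [hiH, hiT, hT i hiT]
    · simpa [hiH, hiT] using h01 i
  · simp [happly, sum_sub_distrib, sum_add_distrib, hsum, hcard]
  · have hiH : i ∉ H := fun h => (hH i h).2 hi
    have hiT : i ∉ T := fun h => by simpa [hJ i hi] using hT i h
    simp [happly, hiH, hiT, hJ i hi]

variable [Fintype κ] [DecidableEq κ]

theorem sum_exchange_cost_nonneg {R : κ → ℕ} {J : κ → Set ι} {ρ u : κ → ι → ℝ}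
    (hu : ∀ k, u k ∈ bundles (R k) (J k))
    (hopt : ∀ v : κ → ι → ℝ, (∀ k, v k ∈ bundles (R k) (J k)) → ∑ k, v k = ∑ k, u k →
      ∑ k, ρ k ⬝ᵥ v k ≤ ∑ k, ρ k ⬝ᵥ u k)
    {r : ℕ} {γ : ℕ → ι} (hγ : γ r = γ 0) (hinj : Set.InjOn γ (range r)) (c : ℕ → κ)
    (hc : ∀ e ∈ range r, u (c e) (γ e) = 1 ∧ u (c e) (γ (e + 1)) = 0 ∧ γ (e + 1) ∉ J (c e)) :
    0 ≤ ∑ e ∈ range r, (ρ (c e) (γ e) - ρ (c e) (γ (e + 1))) := by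
  set E : κ → Finset ℕ := fun k => (range r).filter (c · = k)
  set d : ℕ → ι → ℝ := fun e => Pi.single (γ (e + 1)) 1 - Pi.single (γ e) 1
  have hsucc := injOn_succ_of_cycle hγ hinj
  have hE : ∀ k, (E k : Set ℕ) ⊆ range r := fun k => coe_subset.2 (filter_subset _ _)
  have hv : ∀ k, u k + ∑ e ∈ E k, d e ∈ bundles (R k) (J k) := fun k => by
    have := add_sum_single_sub_sum_single_mem_bundles (hu k)
      (H := (E k).image fun e => γ (e + 1)) (T := (E k).image γ) ?_ ?_ ?_
    · rwa [sum_image (hsucc.mono (hE k)), sum_image (hinj.mono (hE k)), add_sub_assoc,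
        ← sum_sub_distrib] at this
    · simp only [mem_image]
      rintro _ ⟨e, he, rfl⟩
      obtain ⟨he', rfl⟩ := mem_filter.1 he
      exact (hc e he').2
    · simp only [mem_image]
      rintro _ ⟨e, he, rfl⟩
      obtain ⟨he', rfl⟩ := mem_filter.1 he
      exact (hc e he').1
    · rw [card_image_of_injOn (hsucc.mono (hE k)), card_image_of_injOn (hinj.mono (hE k))]
  have htotal : ∑ k, (u k + ∑ e ∈ E k, d e) = ∑ k, u k := by
    rw [sum_add_distrib, sum_fiberwise (range r) c d,
      sum_range_sub (fun e => (Pi.single (γ e) 1 : ι → ℝ)), hγ, sub_self, add_zero]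
  have hvalue : ∑ k, ρ k ⬝ᵥ (u k + ∑ e ∈ E k, d e) = ∑ k, ρ k ⬝ᵥ u k -
      ∑ e ∈ range r, (ρ (c e) (γ e) - ρ (c e) (γ (e + 1))) := by
    have hfiber : ∀ k, ∑ e ∈ E k, ρ k ⬝ᵥ d e = ∑ e ∈ E k, ρ (c e) ⬝ᵥ d e := fun k =>
      sum_congr rfl fun e he => by rw [(mem_filter.1 he).2]
    have hgain : ∀ e, ρ (c e) ⬝ᵥ d e = -(ρ (c e) (γ e) - ρ (c e) (γ (e + 1))) := fun e => by
      simp only [d, dotProduct_sub, dotProduct_single, mul_one, neg_sub]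
    simp only [dotProduct_add, dotProduct_sum, sum_add_distrib, hfiber]
    rw [sum_fiberwise (range r) c fun e => ρ (c e) ⬝ᵥ d e]
    simp only [hgain, sum_neg_distrib, sub_eq_add_neg]
  linarith [hopt _ hv htotal]

end Allocation

section ExchangeWeight

variable {κ ι : Type*} (J : κ → Set ι) (ρ u : κ → ι → ℝ)

def exchangeCosts (α β : ι) : Set EReal :=
  {x | ∃ k, u k α = 1 ∧ u k β = 0 ∧ β ∉ J k ∧ x = ((ρ k α - ρ k β : ℝ) : EReal)}

noncomputable def exchangeWeight (α β : ι) : EReal :=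
  sInf (exchangeCosts J ρ u α β)

variable {J ρ u}

theorem exchangeWeight_le {k : κ} {α β : ι} (h₁ : u k α = 1) (h₀ : u k β = 0) (hJ : β ∉ J k) :
    exchangeWeight J ρ u α β ≤ ((ρ k α - ρ k β : ℝ) : EReal) :=
  sInf_le ⟨k, h₁, h₀, hJ, rfl⟩

theorem le_exchangeWeight {B : ℝ} (hB : ∀ k i, |ρ k i| ≤ B) (α β : ι) :
    ((-(2 * B) : ℝ) : EReal) ≤ exchangeWeight J ρ u α β :=
  le_sInf <| by
    rintro _ ⟨k, -, -, -, rfl⟩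
    rw [EReal.coe_le_coe_iff]
    linarith [abs_le.1 (hB k α), abs_le.1 (hB k β)]

theorem exists_exchangeWeight_eq [Finite κ] {α β : ι} (h : exchangeWeight J ρ u α β ≠ ⊤) :
    ∃ k, u k α = 1 ∧ u k β = 0 ∧ β ∉ J k ∧
      exchangeWeight J ρ u α β = ((ρ k α - ρ k β : ℝ) : EReal) := by
  have hne : (exchangeCosts J ρ u α β).Nonempty :=
    Set.nonempty_iff_ne_empty.2 fun he => h (by rw [exchangeWeight, he, sInf_empty])
  have hfin : (exchangeCosts J ρ u α β).Finite :=
    (Set.finite_range fun k => ((ρ k α - ρ k β : ℝ) : EReal)).subset <| by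
      rintro _ ⟨k, -, -, -, rfl⟩
      exact ⟨k, rfl⟩
  exact hne.csInf_mem hfin

theorem exchangeWeight_ne_bot [Finite κ] (α β : ι) : exchangeWeight J ρ u α β ≠ ⊥ := by
  by_cases h : exchangeWeight J ρ u α β = ⊤
  · simp [h]
  · obtain ⟨k, -, -, -, hk⟩ := exists_exchangeWeight_eq h
    exact hk ▸ EReal.coe_ne_bot _

theorem noNegCycle_exchangeWeight [Fintype κ] [DecidableEq κ] [Fintype ι] [DecidableEq ι]
    {R : κ → ℕ} (hu : ∀ k, u k ∈ bundles (R k) (J k))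
    (hopt : ∀ v : κ → ι → ℝ, (∀ k, v k ∈ bundles (R k) (J k)) → ∑ k, v k = ∑ k, u k →
      ∑ k, ρ k ⬝ᵥ v k ≤ ∑ k, ρ k ⬝ᵥ u k) :
    NoNegCycle (exchangeWeight J ρ u) := by
  refine NoNegCycle.of_simple fun r γ hr hγ hinj => ?_
  by_cases htop : ∃ e ∈ range r, exchangeWeight J ρ u (γ e) (γ (e + 1)) = ⊤
  · obtain ⟨e, he, htop⟩ := htop
    rw [walkWeight_eq_top exchangeWeight_ne_bot he htop]
    exact le_top
  push Not at htop
  have : Nonempty κ := ⟨(exists_exchangeWeight_eq (htop 0 (mem_range.2 hr))).choose⟩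
  choose! c hc using fun e he => exists_exchangeWeight_eq (htop e he)
  have hreal : walkWeight (exchangeWeight J ρ u) γ r =
      ((∑ e ∈ range r, (ρ (c e) (γ e) - ρ (c e) (γ (e + 1))) : ℝ) : EReal) := by
    rw [walkWeight, EReal.coe_finsetSum]
    exact sum_congr rfl fun e he => (hc e he).2.2.2
  rw [hreal, EReal.coe_nonneg]
  exact sum_exchange_cost_nonneg hu hopt hγ hinj c fun e he =>
    ⟨(hc e he).1, (hc e he).2.1, (hc e he).2.2.1⟩

theorem dotProduct_le_of_potential [Fintype ι] {R : ℕ} {k : κ} (hu : u k ∈ bundles R (J k))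
    {y : ι → ℝ} (hy : ∀ α β, (y β : EReal) ≤ y α + exchangeWeight J ρ u α β) {v : ι → ℝ}
    (hv : v ∈ bundles R (J k)) : (ρ k + y) ⬝ᵥ v ≤ (ρ k + y) ⬝ᵥ u k := by
  refine dotProduct_le_of_exchange hu.1 hv.1 (hv.2.1.trans hu.2.1.symm) fun α β h₁ h₀ hv₁ => ?_
  have hJ : β ∉ J k := fun h => by simp [hv.2.2 β h] at hv₁
  have : (y β : EReal) ≤ ((y α + (ρ k α - ρ k β) : ℝ) : EReal) := by
    rw [EReal.coe_add]
    exact (hy α β).trans (by gcongr; exact exchangeWeight_le h₁ h₀ hJ)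
  simp only [Pi.add_apply]
  linarith [EReal.coe_le_coe_iff.1 this]

end ExchangeWeight

end ExchangeGraph

open ExchangeGraph

theorem stmt_16_general (n K : ℕ) (R : Fin K → ℕ)
    (J : Fin K → Set (Fin n)) (ρ : Fin K → Fin n → ℝ)
    (F : Fin K → Set (Fin n → ℝ))
    (hF : ∀ k, F k = {u : Fin n → ℝ |
      (∀ i, u i = 0 ∨ u i = 1) ∧ (∑ i, u i) = (R k : ℝ) ∧ ∀ i ∈ J k, u i = 0})
    (ustar : Fin K → Fin n → ℝ) (hu : ∀ k, ustar k ∈ F k)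
    (hopt : ∀ v : Fin K → Fin n → ℝ, (∀ k, v k ∈ F k) →
      (∑ k, v k) = (∑ k, ustar k) →
      ∑ k, ∑ i, ρ k i * v k i ≤ ∑ k, ∑ i, ρ k i * ustar k i)
    (w : Fin n → Fin n → EReal)
    (hw : ∀ α β, w α β = sInf {x : EReal | ∃ k : Fin K,
      ustar k α = 1 ∧ ustar k β = 0 ∧ β ∉ J k ∧ x = ((ρ k α - ρ k β : ℝ) : EReal)})
    (s : Fin n) :
    ∃ M₀ : ℝ, 0 < M₀ ∧ ∀ M : ℝ, M₀ ≤ M →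
      ∀ w' : Fin n → Fin n → EReal,
      (∀ α β, w' α β =
        if α = s ∧ β ≠ s ∧ w α β = ⊤ then ((M : ℝ) : EReal) else w α β) →
      ((∀ (r : ℕ) (γ : ℕ → Fin n), 1 ≤ r → γ r = γ 0 →
          (0 : EReal) ≤ ∑ u ∈ Finset.range r, w' (γ u) (γ (u + 1)))
      ∧ ∃ ystar : Fin n → ℝ, ystar s = 0
          ∧ (∀ t : Fin n, t ≠ s →
              ((ystar t : EReal) ∈ {c : EReal | ∃ (q : ℕ) (β : ℕ → Fin n),
                  1 ≤ q ∧ β 0 = s ∧ β q = t ∧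
                  c = ∑ u ∈ Finset.range q, w' (β u) (β (u + 1))}
              ∧ ∀ c ∈ {c : EReal | ∃ (q : ℕ) (β : ℕ → Fin n),
                  1 ≤ q ∧ β 0 = s ∧ β q = t ∧
                  c = ∑ u ∈ Finset.range q, w' (β u) (β (u + 1))},
                (ystar t : EReal) ≤ c))
          ∧ ∀ k, ∀ v ∈ F k,
              ∑ i, (ρ k i + ystar i) * v i ≤ ∑ i, (ρ k i + ystar i) * ustar k i) := by
  obtain rfl : F = fun k => bundles (R k) (J k) := funext hF
  obtain rfl : w = exchangeWeight J ρ ustar := funext₂ hw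
  obtain ⟨B, hB0, hB⟩ : ∃ B, 0 ≤ B ∧ ∀ k i, |ρ k i| ≤ B :=
    ⟨∑ k, ∑ i, |ρ k i|, by positivity, fun k i =>
      (Finset.single_le_sum (fun i _ => abs_nonneg (ρ k i)) (Finset.mem_univ i)).trans
        (Finset.single_le_sum (f := fun k => ∑ i, |ρ k i|) (fun k _ => by positivity)
          (Finset.mem_univ k))⟩
  refine ⟨n * (2 * B) + 1, by positivity, fun M hM w' hw' => ?_⟩
  obtain rfl : w' = addSourceEdges (exchangeWeight J ρ ustar) s M := funext₂ hw'
  have hcyc := noNegCycle_addSourceEdges (s := s) (noNegCycle_exchangeWeight hu hopt)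
    (by positivity) (le_exchangeWeight hB) (by simp only [Fintype.card_fin]; linarith)
  obtain ⟨y, hys, hleast, hpot⟩ := hcyc.exists_potential
    (addSourceEdges_ne_bot exchangeWeight_ne_bot) fun t => addSourceEdges_source_ne_top
  refine ⟨hcyc, y, hys, fun t ht => ?_, fun k v hv => dotProduct_le_of_potential (hu k)
    (fun α β => (hpot α β).trans (by gcongr; exact addSourceEdges_le α β)) hv⟩
  have hleast_t := hleast t
  rwa [walkWeightsFrom_eq_of_ne _ (Ne.symm ht)] at hleast_t

/-- From an optimal decomposition `N = ∑ₖ uₖ*`, with exchange-graph weights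
`w_{αβ} = min {ρₖ(α) - ρₖ(β) : uₖ*(α)=1, uₖ*(β)=0, β ∉ Jₖ}` (`+∞` if no such
`k`), fix a source `s` and, for `M` large, modify `w` by setting `w'_{st} = M`
whenever `t ≠ s` and `w_{st} = +∞`. Then for `M` large enough: (a) every cycle
of the modified graph has nonnegative total weight; and (b) the vector `y*`
of single-source shortest-path distances from `s` (with `y*_s = 0`), which is
a finite attained minimum, makes every `uₖ*` optimal over `Fₖ` for the price
vector `y*`. -/
theorem stmt_16 (n K : ℕ) (R : Fin K → ℕ) (hR : ∀ k, R k ≤ n)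
    (J : Fin K → Set (Fin n)) (ρ : Fin K → Fin n → ℝ)
    (F : Fin K → Set (Fin n → ℝ))
    (hF : ∀ k, F k = {u : Fin n → ℝ |
      (∀ i, u i = 0 ∨ u i = 1) ∧ (∑ i, u i) = (R k : ℝ) ∧ ∀ i ∈ J k, u i = 0})
    (ustar : Fin K → Fin n → ℝ) (hu : ∀ k, ustar k ∈ F k)
    (hopt : ∀ v : Fin K → Fin n → ℝ, (∀ k, v k ∈ F k) →
      (∑ k, v k) = (∑ k, ustar k) →
      ∑ k, ∑ i, ρ k i * v k i ≤ ∑ k, ∑ i, ρ k i * ustar k i)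
    (w : Fin n → Fin n → EReal)
    (hw : ∀ α β, w α β = sInf {x : EReal | ∃ k : Fin K,
      ustar k α = 1 ∧ ustar k β = 0 ∧ β ∉ J k ∧ x = ((ρ k α - ρ k β : ℝ) : EReal)})
    (s : Fin n) :
    ∃ M₀ : ℝ, 0 < M₀ ∧ ∀ M : ℝ, M₀ ≤ M →
      ∀ w' : Fin n → Fin n → EReal,
      (∀ α β, w' α β =
        if α = s ∧ β ≠ s ∧ w α β = ⊤ then ((M : ℝ) : EReal) else w α β) →
      ((∀ (r : ℕ) (γ : ℕ → Fin n), 1 ≤ r → γ r = γ 0 →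
          (0 : EReal) ≤ ∑ u ∈ Finset.range r, w' (γ u) (γ (u + 1)))
      ∧ ∃ ystar : Fin n → ℝ, ystar s = 0
          ∧ (∀ t : Fin n, t ≠ s →
              ((ystar t : EReal) ∈ {c : EReal | ∃ (q : ℕ) (β : ℕ → Fin n),
                  1 ≤ q ∧ β 0 = s ∧ β q = t ∧
                  c = ∑ u ∈ Finset.range q, w' (β u) (β (u + 1))}
              ∧ ∀ c ∈ {c : EReal | ∃ (q : ℕ) (β : ℕ → Fin n),
                  1 ≤ q ∧ β 0 = s ∧ β q = t ∧
                  c = ∑ u ∈ Finset.range q, w' (β u) (β (u + 1))},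
                (ystar t : EReal) ≤ c))
          ∧ ∀ k, ∀ v ∈ F k,
              ∑ i, (ρ k i + ystar i) * v i ≤ ∑ i, (ρ k i + ystar i) * ustar k i) :=
  stmt_16_general n K R J ρ F hF ustar hu hopt w hw s
end

section
/- Assume J_k = ∅ for every k, so that F_k = {u ∈ {0,1}^n : ∑_{i=1}^n u(i) = R_k}, with integers 0 ≤ R_k ≤ n (k = 1,…,K). Define N^max ∈ ℕ^n by N^max_m = #{k ∈ {1,…,K} : R_k ≥ m} for m ∈ {1,…,n}. Then the Minkowski sum F_1 + ⋯ + F_K equals the set of vectors N ∈ ℕ^n majorized by N^max, i.e. F_1 + ⋯ + F_K = {N ∈ ℕ^n : ∑_{i=1}^n N_i = ∑_{k=1}^K R_k and, for every m ∈ {1,…,n}, S(N, m) ≤ ∑_{i=1}^m N^max_i}, where S(N, m) denotes the maximum over all m-element subsets A of {1,…,n} of ∑_{i∈A} N_i (the sum of the m largest coordinates of N). -/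
/-!
In a `0-1` matrix with row sums `R k`, row `k` has at most `min m (R k)` ones in any `m` columns,
and `∑ k, min m (R k)` is the `m`-th prefix sum of the conjugate vector `N^max`; this gives `⊆`.

For `⊇`: `N^max` is the column-sum vector of the Ferrers matrix, and column-sum vectors are closed
under permuting columns and under moving a unit from a column `i` to a column `j` with `N j < N i`
(some row has a `1` in column `i` and a `0` in column `j`). Every `x` majorized by `y` is reached
from `y` by such moves: with both sorted, let `j` be the first index where `x` exceeds `y` and `i`
an earlier index where `y` exceeds `x`. Moving a unit of `y` from `i` to `j` keeps `x` majorized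
and strictly decreases `∑ t, y t ^ 2`.
-/

namespace GaleRyser

open Finset

section TopSum

variable {ι κ : Type*} [Fintype ι] [Fintype κ]

def topSum (N : ι → ℕ) (m : ℕ) : ℕ :=
  (powersetCard m (univ : Finset ι)).sup fun A => ∑ i ∈ A, N i

theorem topSum_le_iff {N : ι → ℕ} {m c : ℕ} :
    topSum N m ≤ c ↔ ∀ A : Finset ι, #A = m → ∑ i ∈ A, N i ≤ c := by
  simp [topSum, mem_powersetCard]

theorem sum_le_topSum (N : ι → ℕ) (A : Finset ι) : ∑ i ∈ A, N i ≤ topSum N #A :=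
  topSum_le_iff.1 le_rfl A rfl

theorem topSum_zero (N : ι → ℕ) : topSum N 0 = 0 := by
  simp [topSum]

theorem topSum_comp_equiv_le (N : ι → ℕ) (e : κ ≃ ι) (m : ℕ) :
    topSum (N ∘ e) m ≤ topSum N m :=
  topSum_le_iff.2 fun A hA => by
    simpa [hA] using sum_le_topSum N (A.map e.toEmbedding)

theorem topSum_comp_equiv (N : ι → ℕ) (e : κ ≃ ι) (m : ℕ) :
    topSum (N ∘ e) m = topSum N m :=
  (topSum_comp_equiv_le N e m).antisymm <| by
    simpa [Function.comp_assoc] using topSum_comp_equiv_le (N ∘ e) e.symm m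

end TopSum

section PrefixSum

variable {n : ℕ}

def prefixSum (N : Fin n → ℕ) (m : ℕ) : ℕ :=
  ∑ i ∈ univ.filter (fun i : Fin n => (i : ℕ) < m), N i

theorem prefixSum_le_topSum (N : Fin n → ℕ) {m : ℕ} (hm : m ≤ n) :
    prefixSum N m ≤ topSum N m := by
  have h := sum_le_topSum N (univ.filter fun i : Fin n => (i : ℕ) < m)
  rwa [Fin.card_filter_val_lt, min_eq_right hm] at h

theorem prefixSum_succ (N : Fin n → ℕ) {m : ℕ} (hm : m < n) :
    prefixSum N (m + 1) = prefixSum N m + N ⟨m, hm⟩ := by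
  have : univ.filter (fun i : Fin n => (i : ℕ) < m + 1)
      = insert ⟨m, hm⟩ (univ.filter fun i : Fin n => (i : ℕ) < m) := by
    ext i
    simp only [mem_filter, mem_univ, true_and, mem_insert, Fin.ext_iff]
    omega
  rw [prefixSum, this, sum_insert (by simp), add_comm, prefixSum]

theorem sum_le_prefixSum_card_of_antitone {N : Fin n → ℕ} (hN : Antitone N)
    (A : Finset (Fin n)) : ∑ i ∈ A, N i ≤ prefixSum N #A := by
  induction A using Finset.induction_on_max with
  | empty => simp [prefixSum]
  | insert a A ha ih =>
    have hA : #A ≤ a := by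
      simpa using card_le_card fun x hx => mem_Iio.2 (ha x hx)
    rw [sum_insert fun h => (ha a h).false, card_insert_of_notMem fun h => (ha a h).false,
      prefixSum_succ N (hA.trans_lt a.2), add_comm]
    exact add_le_add ih (hN hA)

theorem topSum_eq_prefixSum_of_antitone {N : Fin n → ℕ} (hN : Antitone N) {m : ℕ}
    (hm : m ≤ n) : topSum N m = prefixSum N m :=
  (topSum_le_iff.2 fun A hA => hA ▸ sum_le_prefixSum_card_of_antitone hN A).antisymm
    (prefixSum_le_topSum N hm)

theorem exists_antitone_comp_perm (N : Fin n → ℕ) :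
    ∃ σ : Equiv.Perm (Fin n), Antitone (N ∘ σ) :=
  ⟨Tuple.sort (OrderDual.toDual ∘ N), Tuple.monotone_sort (OrderDual.toDual ∘ N)⟩

end PrefixSum

section Transfer

variable {ι κ : Type*} [DecidableEq ι]

def transfer (i j : ι) (y : ι → ℕ) : ι → ℕ :=
  y + Pi.single j 1 - Pi.single i 1

theorem transfer_add_single {y : ι → ℕ} {i : ι} (j : ι) (hi : 1 ≤ y i) :
    transfer i j y + Pi.single i 1 = y + Pi.single j 1 := by
  ext t
  simp only [transfer, Pi.add_apply, Pi.sub_apply, Pi.single_apply]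
  split_ifs with hti <;> subst_vars <;> omega

theorem sum_transfer_add {y : ι → ℕ} {i : ι} (j : ι) (hi : 1 ≤ y i) (s : Finset ι) :
    ∑ t ∈ s, transfer i j y t + (if i ∈ s then 1 else 0)
      = ∑ t ∈ s, y t + if j ∈ s then 1 else 0 := by
  simpa [sum_add_distrib, sum_pi_single'] using
    congrArg (fun f => ∑ t ∈ s, f t) (transfer_add_single j hi)

theorem transfer_comp_equiv [DecidableEq κ] (e : κ ≃ ι) (i j : κ) (y : ι → ℕ) :
    transfer (e i) (e j) y ∘ e = transfer i j (y ∘ e) := by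
  ext t
  simp [transfer, Pi.single_apply, e.injective.eq_iff]

theorem sum_sq_transfer_lt [Fintype ι] {y : ι → ℕ} {i j : ι} (h : y j + 1 < y i) :
    ∑ t, transfer i j y t ^ 2 < ∑ t, y t ^ 2 := by
  have hji : j ≠ i := by rintro rfl; omega
  have hv (t : ι) := congrFun (transfer_add_single j (by omega : 1 ≤ y i)) t
  simp only [Pi.add_apply, Pi.single_apply] at hv
  have hj : j ∈ univ.erase i := mem_erase.2 ⟨hji, mem_univ j⟩
  have hrest : ∀ t ∈ (univ.erase i).erase j, transfer i j y t ^ 2 = y t ^ 2 := by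
    intro t ht
    obtain ⟨htj, hti⟩ : t ≠ j ∧ t ≠ i := by simpa using ht
    exact congrArg (· ^ 2) (by simpa [hti, htj] using hv t)
  rw [← add_sum_erase _ _ (mem_univ i), ← add_sum_erase _ _ (mem_univ i),
    ← add_sum_erase _ _ hj, ← add_sum_erase _ _ hj, sum_congr rfl hrest]
  have hi' := hv i
  have hj' := hv j
  simp only [if_true, if_neg hji, if_neg hji.symm, add_zero] at hi' hj'
  rw [← hi', hj']
  nlinarith

end Transfer

section ZeroOneColSum

variable {ι ι' κ : Type*} [Fintype ι] [Fintype ι'] [Fintype κ]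

def IsZeroOneColSum (R : κ → ℕ) (N : ι → ℕ) : Prop :=
  ∃ u : κ → ι → ℕ, (∀ k, (∀ i, u k i ≤ 1) ∧ ∑ i, u k i = R k) ∧ ∑ k, u k = N

namespace IsZeroOneColSum

variable {R : κ → ℕ} {N : ι → ℕ}

theorem sum_eq (h : IsZeroOneColSum R N) : ∑ i, N i = ∑ k, R k := by
  obtain ⟨u, hu, rfl⟩ := h
  simp only [Finset.sum_apply]
  rw [sum_comm]
  exact sum_congr rfl fun k _ => (hu k).2

theorem sum_le (h : IsZeroOneColSum R N) (A : Finset ι) :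
    ∑ i ∈ A, N i ≤ ∑ k, min #A (R k) := by
  obtain ⟨u, hu, rfl⟩ := h
  simp only [Finset.sum_apply]
  rw [sum_comm]
  refine sum_le_sum fun k _ => le_min ?_ ?_
  · simpa using sum_le_sum fun i (_ : i ∈ A) => (hu k).1 i
  · exact (sum_le_sum_of_subset (subset_univ A)).trans (hu k).2.le

theorem comp_equiv (h : IsZeroOneColSum R N) (e : ι' ≃ ι) : IsZeroOneColSum R (N ∘ e) := by
  obtain ⟨u, hu, rfl⟩ := h
  refine ⟨fun k => u k ∘ e, fun k => ⟨fun i => (hu k).1 (e i), ?_⟩, ?_⟩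
  · exact (Equiv.sum_comp e (u k)).trans (hu k).2
  · ext t
    simp [Finset.sum_apply]

theorem transfer [DecidableEq ι] [DecidableEq κ] (h : IsZeroOneColSum R N) {i j : ι}
    (hij : N j < N i) : IsZeroOneColSum R (transfer i j N) := by
  obtain ⟨u, hu, rfl⟩ := h
  have hij' : ∑ k, u k j < ∑ k, u k i := by simpa [Finset.sum_apply] using hij
  obtain ⟨k, -, hk⟩ : ∃ k ∈ univ, u k j < u k i := exists_lt_of_sum_lt hij'
  have hki : u k i = 1 := le_antisymm ((hu k).1 i) (by omega)
  have hkj : u k j = 0 := by omega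
  have hrow := transfer_add_single (i := i) j (y := u k) (by omega)
  refine ⟨Function.update u k (GaleRyser.transfer i j (u k)), fun k' => ?_, ?_⟩
  · rcases eq_or_ne k' k with rfl | hk'
    · refine ⟨fun t => ?_, ?_⟩
      · have hrowt := congrFun hrow t
        have hut := (hu k').1 t
        simp only [Function.update_self, Pi.add_apply, Pi.single_apply] at hrowt ⊢
        split_ifs at hrowt <;> subst_vars <;> omega
      · have := sum_transfer_add (i := i) j (y := u k') (by omega) univ
        simpa [(hu k').2] using this
    · simpa [hk'] using hu k'
  · refine add_right_cancel (b := Pi.single i 1) ?_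
    rw [transfer_add_single j (by omega),
      sum_update_of_mem (mem_univ k), add_right_comm, hrow, add_right_comm,
      ← sum_eq_add_sum_sdiff_singleton_of_mem (mem_univ k)]

end IsZeroOneColSum

end ZeroOneColSum

section Majorization

variable {n : ℕ}

theorem prefixSum_transfer_add {y : Fin n → ℕ} {i : Fin n} (j : Fin n) (hi : 1 ≤ y i)
    (m : ℕ) :
    prefixSum (transfer i j y) m + (if (i : ℕ) < m then 1 else 0)
      = prefixSum y m + if (j : ℕ) < m then 1 else 0 := by
  have h := sum_transfer_add j hi (univ.filter fun t : Fin n => (t : ℕ) < m)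
  simp only [mem_filter, mem_univ, true_and] at h
  exact h

theorem exists_transfer_prefixSum_le {x y : Fin n → ℕ} (hx : Antitone x) (hxy : x ≠ y)
    (hsum : ∑ t, x t = ∑ t, y t) (hpre : ∀ m ≤ n, prefixSum x m ≤ prefixSum y m) :
    ∃ i j, y j + 1 < y i ∧ ∀ m ≤ n, prefixSum x m ≤ prefixSum (transfer i j y) m := by
  obtain ⟨j, hj, hjmin⟩ : ∃ j, y j < x j ∧ ∀ t < j, x t ≤ y t := by
    have hne : {t | y t < x t}.Nonempty := by
      by_contra! hempty
      refine hxy (funext fun t => (sum_eq_sum_iff_of_le fun t _ => ?_).1 hsum t (mem_univ t))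
      exact not_lt.1 fun h => hempty.subset h
    obtain ⟨j, hj, hmin⟩ := wellFounded_lt.has_min _ hne
    exact ⟨j, hj, fun t ht => not_lt.1 fun h => hmin t h ht⟩
  obtain ⟨i, hi, hxi⟩ : ∃ i, i < j ∧ x i < y i := by
    have h := hpre (j + 1) j.2
    rw [prefixSum_succ _ j.2, prefixSum_succ _ j.2] at h
    change prefixSum x j + x j ≤ prefixSum y j + y j at h
    obtain ⟨i, hi, hlt⟩ := exists_lt_of_sum_lt (by omega : prefixSum x j < prefixSum y j)
    exact ⟨i, (mem_filter.1 hi).2, hlt⟩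
  refine ⟨i, j, by have := hx hi.le; omega, fun m hm => ?_⟩
  have htr := prefixSum_transfer_add j (by omega : 1 ≤ y i) m
  have hij : (i : ℕ) < j := hi
  by_cases hm' : (i : ℕ) < m ∧ m ≤ j
  · have hlt : prefixSum x m < prefixSum y m := by
      refine sum_lt_sum (fun t ht => hjmin t ?_) ⟨i, by simp [hm'.1], hxi⟩
      simp only [mem_filter, mem_univ, true_and] at ht
      exact Fin.lt_def.2 (by omega)
    rw [if_pos hm'.1, if_neg (by omega)] at htr
    omega
  · have := hpre m hm
    split_ifs at htr <;> omega

theorem of_majorized {P : (Fin n → ℕ) → Prop}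
    (hperm : ∀ y (σ : Equiv.Perm (Fin n)), P y → P (y ∘ σ))
    (htransfer : ∀ y i j, y j + 1 < y i → P y → P (transfer i j y))
    {x y : Fin n → ℕ} (hy : P y) (hsum : ∑ t, x t = ∑ t, y t)
    (hdom : ∀ m ≤ n, topSum x m ≤ topSum y m) : P x := by
  induction hW : ∑ t, y t ^ 2 using Nat.strong_induction_on generalizing y with
  | _ W ih =>
  obtain ⟨σx, hσx⟩ := exists_antitone_comp_perm x
  obtain ⟨σy, hσy⟩ := exists_antitone_comp_perm y
  by_cases hxy : x ∘ σx = y ∘ σy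
  · have hx : x = y ∘ σy ∘ σx.symm := by rw [← Function.comp_assoc, ← hxy]; ext; simp
    exact hx ▸ hperm _ _ (hperm _ _ hy)
  have hpre (m) (hm : m ≤ n) : prefixSum (x ∘ σx) m ≤ prefixSum (y ∘ σy) m := by
    rw [← topSum_eq_prefixSum_of_antitone hσx hm, ← topSum_eq_prefixSum_of_antitone hσy hm,
      topSum_comp_equiv, topSum_comp_equiv]
    exact hdom m hm
  have hsum' : ∑ t, (x ∘ σx) t = ∑ t, (y ∘ σy) t := by
    simpa [Equiv.sum_comp] using hsum
  obtain ⟨i, j, hij, hpre'⟩ := exists_transfer_prefixSum_le hσx hxy hsum' hpre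
  have hij' : y (σy j) + 1 < y (σy i) := hij
  have hcomp := transfer_comp_equiv σy i j y
  refine ih _ ?_ (htransfer y (σy i) (σy j) hij' hy) ?_ (fun m hm => ?_) rfl
  · exact hW ▸ sum_sq_transfer_lt hij'
  · have := sum_transfer_add (σy j) (by omega : 1 ≤ y (σy i)) univ
    simp only [mem_univ, if_true] at this
    omega
  · calc topSum x m = prefixSum (x ∘ σx) m := by
          rw [← topSum_eq_prefixSum_of_antitone hσx hm, topSum_comp_equiv]
      _ ≤ prefixSum (transfer (σy i) (σy j) y ∘ σy) m := hcomp ▸ hpre' m hm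
      _ ≤ topSum (transfer (σy i) (σy j) y ∘ σy) m := prefixSum_le_topSum _ hm
      _ = topSum (transfer (σy i) (σy j) y) m := topSum_comp_equiv _ _ _

theorem IsZeroOneColSum.of_majorized {κ : Type*} [Fintype κ] {R : κ → ℕ}
    {x y : Fin n → ℕ} (hy : IsZeroOneColSum R y) (hsum : ∑ t, x t = ∑ t, y t)
    (hdom : ∀ m ≤ n, topSum x m ≤ topSum y m) : IsZeroOneColSum R x :=
  GaleRyser.of_majorized (fun _ σ h => h.comp_equiv σ)
    (fun _ _ _ hij h => by classical exact h.transfer (by omega)) hy hsum hdom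

end Majorization

section Conjugate

variable {κ : Type*} [Fintype κ] {n : ℕ}

def conjugate (R : κ → ℕ) (n : ℕ) : Fin n → ℕ :=
  fun i => #{k | (i : ℕ) < R k}

theorem prefixSum_conjugate (R : κ → ℕ) {m : ℕ} (hm : m ≤ n) :
    prefixSum (conjugate R n) m = ∑ k, min m (R k) := by
  simp only [prefixSum, conjugate, card_filter]
  rw [sum_comm]
  refine sum_congr rfl fun k _ => ?_
  rw [← card_filter, filter_filter]
  simp only [← lt_min_iff]
  rw [Fin.card_filter_val_lt]
  omega

theorem isZeroOneColSum_conjugate {R : κ → ℕ} (hR : ∀ k, R k ≤ n) :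
    IsZeroOneColSum R (conjugate R n) := by
  refine ⟨fun k i => if (i : ℕ) < R k then 1 else 0, fun k => ⟨fun i => ?_, ?_⟩, ?_⟩
  · dsimp only
    split_ifs <;> omega
  · rw [← card_filter, Fin.card_filter_val_lt, min_eq_right (hR k)]
  · ext i
    simp only [conjugate, Finset.sum_apply, card_filter]

end Conjugate

end GaleRyser

open GaleRyser in
/-- Gale–Ryser corollary: with `Jₖ = ∅`, the Minkowski sum `F₁ + ⋯ + F_K`
equals the set of `N ∈ ℕⁿ` majorized by `N^max`, where
`N^max_m = #{k : Rₖ ≥ m}` and `S(N,m)` is the sum of the `m` largest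
coordinates of `N` (the maximum of `∑_{i∈A} Nᵢ` over `m`-element subsets). -/
theorem stmt_17 (n K : ℕ) (R : Fin K → ℕ) (hR : ∀ k, R k ≤ n)
    (F : Fin K → Set (Fin n → ℕ))
    (hF : ∀ k, F k = {u : Fin n → ℕ | (∀ i, u i ≤ 1) ∧ (∑ i, u i) = R k})
    (Nmax : Fin n → ℕ)
    (hNmax : ∀ m : Fin n,
      Nmax m = (Finset.univ.filter (fun k : Fin K => (m : ℕ) + 1 ≤ R k)).card) :
    {N : Fin n → ℕ | ∃ u : Fin K → Fin n → ℕ, (∀ k, u k ∈ F k) ∧ (∑ k, u k) = N}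
      = {N : Fin n → ℕ | (∑ i, N i) = (∑ k, R k)
          ∧ ∀ m : ℕ, 1 ≤ m → m ≤ n →
            (Finset.powersetCard m (Finset.univ : Finset (Fin n))).sup
                (fun A => ∑ i ∈ A, N i)
              ≤ ∑ i ∈ Finset.univ.filter (fun i : Fin n => (i : ℕ) < m), Nmax i} := by
  obtain rfl : F = fun k => {u | (∀ i, u i ≤ 1) ∧ ∑ i, u i = R k} := funext hF
  obtain rfl : Nmax = conjugate R n := funext hNmax
  ext N
  change IsZeroOneColSum R N ↔
    _ ∧ ∀ m, 1 ≤ m → m ≤ n → topSum N m ≤ prefixSum (conjugate R n) m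
  have hconj := isZeroOneColSum_conjugate hR
  constructor
  · intro hN
    refine ⟨hN.sum_eq, fun m _ hm => ?_⟩
    rw [prefixSum_conjugate R hm, topSum_le_iff]
    exact fun A hA => hA ▸ hN.sum_le A
  · rintro ⟨hsum, hdom⟩
    refine hconj.of_majorized (hsum.trans hconj.sum_eq.symm) fun m hm => ?_
    rcases Nat.eq_zero_or_pos m with rfl | hm0
    · exact (topSum_zero N).trans_le (Nat.zero_le _)
    · exact (hdom m hm0 hm).trans (prefixSum_le_topSum _ hm)
end
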